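/- arXiv:2204.02732 — 2 statements merged into one kernel-verified Lean document; each statement's English description precedes it below -/
import Mathlib

section
/- Let S be a Steiner triple system of order 21 with a colouring whose colour classes C, B, A have cardinalities |C| = 8, |B| = 7 and |A| = 6. Suppose every pair of distinct points of A lies in a block whose third point is in B. Then for every point x ∈ C, the set A ∪ {x} contains no block; consequently A ∪ {x}, B, C ∖ {x} is a colouring of S with colour classes of cardinalities 7, 7 and 7. -/
/-- A Steiner triple system on point set `points` with block set `blocks`:
every block is a 3-element subset of `points`, and every pair of distinct
points lies in exactly one block. -/
def IsSTS {α : Type*} [DecidableEq α] (points : Finset α) (blocks : Finset (Finset α)) : Prop :=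
  (∀ b ∈ blocks, b ⊆ points ∧ b.card = 3) ∧
  (∀ x ∈ points, ∀ y ∈ points, x ≠ y → ∃! b, b ∈ blocks ∧ x ∈ b ∧ y ∈ b)

/-- An `ℓ`-good sequencing: a permutation (listing) of the points such that no
`ℓ` consecutive entries contain a block. -/
def IsGoodSeq {α : Type*} [DecidableEq α] (points : Finset α) (blocks : Finset (Finset α))
    (ℓ : ℕ) (L : List α) : Prop :=
  L.Nodup ∧ L.toFinset = points ∧
  ∀ i : ℕ, ∀ b ∈ blocks, ¬ b ⊆ ((L.drop i).take ℓ).toFinset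

/-- A cyclic `ℓ`-good sequencing: a permutation (listing) of the points such that no
`ℓ` cyclically consecutive entries contain a block. -/
def IsCyclicGoodSeq {α : Type*} [DecidableEq α] (points : Finset α) (blocks : Finset (Finset α))
    (ℓ : ℕ) (L : List α) : Prop :=
  L.Nodup ∧ L.toFinset = points ∧
  ∀ i : ℕ, ∀ b ∈ blocks, ¬ b ⊆ (((L ++ L).drop i).take ℓ).toFinset

/-- An independent set: a set of points containing no block. -/
def IsIndep {α : Type*} [DecidableEq α] (blocks : Finset (Finset α)) (I : Finset α) : Prop :=
  ∀ b ∈ blocks, ¬ b ⊆ I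

/-- A (proper) colouring with colour set `Fin k`: no block is monochromatic,
i.e. every colour class is an independent set. -/
def IsColouring {α : Type*} [DecidableEq α] (blocks : Finset (Finset α)) {k : ℕ}
    (χ : α → Fin k) : Prop :=
  ∀ b ∈ blocks, ∃ x ∈ b, ∃ y ∈ b, χ x ≠ χ y

/-- A colouring with three explicitly given colour classes `A`, `B`, `C`:
they partition the point set and each is independent. -/
def IsColouring3 {α : Type*} [DecidableEq α] (points : Finset α) (blocks : Finset (Finset α))
    (A B C : Finset α) : Prop :=
  A ∪ B ∪ C = points ∧ Disjoint A B ∧ Disjoint A C ∧ Disjoint B C ∧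
  IsIndep blocks A ∧ IsIndep blocks B ∧ IsIndep blocks C

namespace IsSTS

variable {α : Type*} [DecidableEq α] {points : Finset α} {blocks : Finset (Finset α)}

theorem eq_of_mem_of_mem (hS : IsSTS points blocks) {b b' : Finset α}
    (hb : b ∈ blocks) (hb' : b' ∈ blocks) {y z : α} (hyz : y ≠ z)
    (hy : y ∈ b) (hz : z ∈ b) (hy' : y ∈ b') (hz' : z ∈ b') : b = b' :=
  (hS.2 y ((hS.1 b hb).1 hy) z ((hS.1 b hb).1 hz) hyz).unique ⟨hb, hy, hz⟩ ⟨hb', hy', hz'⟩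

/-- The block through `x` and two points `y, z` of `A` is the block through `y, z`, whose
third point lies in `B`; so it is neither `x` nor in `A`. -/
theorem isIndep_insert (hS : IsSTS points blocks) {A B : Finset α} {x : α}
    (hA : IsIndep blocks A) (hAB : Disjoint A B) (hxB : x ∉ B)
    (hpairs : ∀ y ∈ A, ∀ z ∈ A, y ≠ z → ∃ b ∈ blocks, y ∈ b ∧ z ∈ b ∧ ∃ w ∈ b, w ∈ B) :
    IsIndep blocks (insert x A) := by
  intro b hb hsub
  by_cases hxb : x ∈ b
  · have hcard : 1 < (b.erase x).card := by
      rw [Finset.card_erase_of_mem hxb, (hS.1 b hb).2]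
      norm_num
    obtain ⟨y, hy, z, hz, hyz⟩ := Finset.one_lt_card.mp hcard
    have mem_A : ∀ {a}, a ∈ b.erase x → a ∈ A := fun ha =>
      (Finset.mem_insert.mp (hsub (Finset.mem_of_mem_erase ha))).resolve_left
        (Finset.ne_of_mem_erase ha)
    obtain ⟨b', hb', hyb', hzb', w, hwb', hwB⟩ := hpairs y (mem_A hy) z (mem_A hz) hyz
    have hb'b : b' = b := hS.eq_of_mem_of_mem hb' hb hyz hyb' hzb'
      (Finset.mem_of_mem_erase hy) (Finset.mem_of_mem_erase hz)
    rcases Finset.mem_insert.mp (hsub (hb'b ▸ hwb')) with rfl | hwA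
    · exact hxB hwB
    · exact Finset.disjoint_left.mp hAB hwA hwB
  · exact hA b hb fun a ha =>
      (Finset.mem_insert.mp (hsub ha)).resolve_left (ne_of_mem_of_not_mem ha hxb)

end IsSTS

theorem IsColouring3.recolour {α : Type*} [DecidableEq α] {points : Finset α}
    {blocks : Finset (Finset α)} {A B C : Finset α} {x : α}
    (hcol : IsColouring3 points blocks C B A) (hx : x ∈ C)
    (hind : IsIndep blocks (insert x A)) :
    IsColouring3 points blocks (insert x A) B (C.erase x) := by
  obtain ⟨hunion, hCB, hCA, hBA, hiC, hiB, -⟩ := hcol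
  refine ⟨?_, ?_, ?_, ?_, hind, hiB, fun b hb hsub => hiC b hb (hsub.trans (C.erase_subset x))⟩
  · rw [← hunion]
    ext a
    simp only [Finset.mem_union, Finset.mem_insert, Finset.mem_erase]
    by_cases hax : a = x <;> aesop
  · exact Finset.disjoint_insert_left.mpr ⟨Finset.disjoint_left.mp hCB hx, hBA.symm⟩
  · exact Finset.disjoint_insert_left.mpr
      ⟨C.notMem_erase x, hCA.symm.mono_right (C.erase_subset x)⟩
  · exact hCB.symm.mono_right (C.erase_subset x)

theorem stmt15_general {α : Type*} [DecidableEq α] (points : Finset α) (blocks : Finset (Finset α))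
    (hS : IsSTS points blocks)
    (A B C : Finset α) (hcol : IsColouring3 points blocks C B A)
    (hC : C.card = 8) (hB : B.card = 7) (hA : A.card = 6)
    (hpairs : ∀ x ∈ A, ∀ y ∈ A, x ≠ y →
      ∃ b ∈ blocks, x ∈ b ∧ y ∈ b ∧ ∃ z ∈ b, z ∈ B ∧ z ≠ x ∧ z ≠ y) :
    ∀ x ∈ C,
      (∀ b ∈ blocks, ¬ b ⊆ insert x A) ∧
      IsColouring3 points blocks (insert x A) B (C.erase x) ∧
      (insert x A).card = 7 ∧ B.card = 7 ∧ (C.erase x).card = 7 := by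
  intro x hx
  have hind : IsIndep blocks (insert x A) := by
    refine hS.isIndep_insert hcol.2.2.2.2.2.2 hcol.2.2.2.1.symm
      (Finset.disjoint_left.mp hcol.2.1 hx) fun y hy z hz hyz => ?_
    obtain ⟨b, hb, hyb, hzb, w, hwb, hwB, -⟩ := hpairs y hy z hz hyz
    exact ⟨b, hb, hyb, hzb, w, hwb, hwB⟩
  refine ⟨hind, hcol.recolour hx hind, ?_, hB, ?_⟩
  · rw [Finset.card_insert_of_notMem (Finset.disjoint_left.mp hcol.2.2.1 hx), hA]
  · rw [Finset.card_erase_of_mem hx, hC]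

theorem stmt15 {α : Type*} [DecidableEq α] (points : Finset α) (blocks : Finset (Finset α))
    (hS : IsSTS points blocks) (hv : points.card = 21)
    (A B C : Finset α) (hcol : IsColouring3 points blocks C B A)
    (hC : C.card = 8) (hB : B.card = 7) (hA : A.card = 6)
    (hpairs : ∀ x ∈ A, ∀ y ∈ A, x ≠ y →
      ∃ b ∈ blocks, x ∈ b ∧ y ∈ b ∧ ∃ z ∈ b, z ∈ B ∧ z ≠ x ∧ z ≠ y) :
    ∀ x ∈ C,
      (∀ b ∈ blocks, ¬ b ⊆ insert x A) ∧
      IsColouring3 points blocks (insert x A) B (C.erase x) ∧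
      (insert x A).card = 7 ∧ B.card = 7 ∧ (C.erase x).card = 7 :=
  stmt15_general points blocks hS A B C hcol hC hB hA hpairs
end

section
/- Let S be a Steiner triple system of order 21 which admits a colouring whose three colour classes have cardinalities 8, 7 and 6. Then S admits a 5-good sequencing. -/
set_option linter.unusedSectionVars false
set_option maxHeartbeats 2000000

namespace STS16

variable {α : Type*} [DecidableEq α]
def NB (blocks : Finset (Finset α)) (x y z : α) : Prop :=
  ∀ b ∈ blocks, ¬ (x ∈ b ∧ y ∈ b ∧ z ∈ b)
lemma NB.p213 {blocks : Finset (Finset α)} {x y z : α} (h : NB blocks x y z) :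
    NB blocks y x z := fun b hb hc => h b hb ⟨hc.2.1, hc.1, hc.2.2⟩
lemma NB.p132 {blocks : Finset (Finset α)} {x y z : α} (h : NB blocks x y z) :
    NB blocks x z y := fun b hb hc => h b hb ⟨hc.1, hc.2.2, hc.2.1⟩
lemma NB.p231 {blocks : Finset (Finset α)} {x y z : α} (h : NB blocks x y z) :
    NB blocks y z x := h.p213.p132
lemma NB.p312 {blocks : Finset (Finset α)} {x y z : α} (h : NB blocks x y z) :
    NB blocks z x y := h.p231.p231
lemma NB.p321 {blocks : Finset (Finset α)} {x y z : α} (h : NB blocks x y z) :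
    NB blocks z y x := h.p312.p132
open Classical in
noncomputable def th (blocks : Finset (Finset α)) (x y : α) : α :=
  if h : ∃ z, z ≠ x ∧ z ≠ y ∧ ∀ b ∈ blocks, x ∈ b → y ∈ b → b = {x, y, z} then h.choose else x
lemma th_spec {points : Finset α} {blocks : Finset (Finset α)} (hS : IsSTS points blocks)
    {x y : α} (hx : x ∈ points) (hy : y ∈ points) (hxy : x ≠ y) :
    th blocks x y ≠ x ∧ th blocks x y ≠ y ∧
      ∀ b ∈ blocks, x ∈ b → y ∈ b → b = {x, y, th blocks x y} := by
  obtain ⟨b0, ⟨hb0, hxb0, hyb0⟩, huniq⟩ := hS.2 x hx y hy hxy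
  have hcard : b0.card = 3 := (hS.1 b0 hb0).2
  have h2 : (b0.erase x).card = 2 := by rw [Finset.card_erase_of_mem hxb0, hcard]
  have hy' : y ∈ b0.erase x := Finset.mem_erase.mpr ⟨hxy.symm, hyb0⟩
  have h1 : ((b0.erase x).erase y).card = 1 := by rw [Finset.card_erase_of_mem hy', h2]
  obtain ⟨z, hz⟩ := Finset.card_eq_one.mp h1
  have hzmem : z ∈ (b0.erase x).erase y := hz ▸ Finset.mem_singleton_self z
  have hzy : z ≠ y := (Finset.mem_erase.mp hzmem).1
  have hzx : z ≠ x := (Finset.mem_erase.mp (Finset.mem_erase.mp hzmem).2).1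
  have hzb : z ∈ b0 := Finset.mem_of_mem_erase (Finset.mem_of_mem_erase hzmem)
  have hsub : ({x, y, z} : Finset α) ⊆ b0 := by
    intro w hw
    simp only [Finset.mem_insert, Finset.mem_singleton] at hw
    rcases hw with rfl | rfl | rfl <;> assumption
  have hcard3 : ({x, y, z} : Finset α).card = 3 := by
    rw [Finset.card_insert_of_notMem (by simp [hxy, hzx.symm]),
      Finset.card_insert_of_notMem (by simp [hzy.symm]), Finset.card_singleton]
  have hb0eq : b0 = {x, y, z} :=
    (Finset.eq_of_subset_of_card_le hsub (by rw [hcard, hcard3])).symm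
  have hex : ∃ z, z ≠ x ∧ z ≠ y ∧ ∀ b ∈ blocks, x ∈ b → y ∈ b → b = {x, y, z} :=
    ⟨z, hzx, hzy, fun b hb hxb hyb => by rw [huniq b ⟨hb, hxb, hyb⟩]; exact hb0eq⟩
  rw [th, dif_pos hex]
  exact ⟨hex.choose_spec.1, hex.choose_spec.2.1, hex.choose_spec.2.2⟩
lemma nb_of_ne {points : Finset α} {blocks : Finset (Finset α)} (hS : IsSTS points blocks)
    {x y z : α} (hx : x ∈ points) (hy : y ∈ points) (hxy : x ≠ y)
    (hz1 : z ≠ x) (hz2 : z ≠ y) (hz3 : z ≠ th blocks x y) : NB blocks x y z := by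
  rintro b hb ⟨h1, h2, h3⟩
  have hb3 := (th_spec hS hx hy hxy).2.2 b hb h1 h2
  rw [hb3] at h3
  simp only [Finset.mem_insert, Finset.mem_singleton] at h3
  tauto
lemma pick {S F : Finset α} (h : F.card < S.card) : ∃ z ∈ S, z ∉ F := by
  by_contra h'
  push_neg at h'
  exact absurd (Finset.card_le_card fun z hz => h' z hz) (by omega)

/-- Key window lemma: a window split into a part of X and a part of Y contains no block. -/
lemma key {blocks : Finset (Finset α)} {X Y P Q W : Finset α}
    (hcard : ∀ b ∈ blocks, b.card = 3)
    (hX : IsIndep blocks X) (hY : IsIndep blocks Y)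
    (hP : P ⊆ X) (hQ : Q ⊆ Y) (hW : W ⊆ P ∪ Q)
    (H1 : ∀ x ∈ P, ∀ y ∈ P, x ≠ y → ∀ z ∈ Q, NB blocks x y z)
    (H2 : ∀ x ∈ Q, ∀ y ∈ Q, x ≠ y → ∀ z ∈ P, NB blocks x y z) :
    ∀ b ∈ blocks, ¬ b ⊆ W := by
  intro b hb hsub
  have hsub' : b ⊆ P ∪ Q := hsub.trans hW
  have hts : b \ P ⊆ Q := by
    intro x hx
    rcases Finset.mem_sdiff.mp hx with ⟨hxb, hxP⟩
    rcases Finset.mem_union.mp (hsub' hxb) with h | h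
    · exact absurd h hxP
    · exact h
  have hcard3 : b.card = 3 := hcard b hb
  have hst : (b ∩ P).card + (b \ P).card = 3 := by
    rw [Finset.card_inter_add_card_sdiff, hcard3]
  have hsb : b ∩ P ⊆ b := Finset.inter_subset_left
  have hub : (b ∩ P).card ≤ 3 := by omega
  have htb : b \ P ⊆ b := Finset.sdiff_subset
  have hsP : b ∩ P ⊆ P := Finset.inter_subset_right
  interval_cases h : (b ∩ P).card
  · -- b ⊆ Q
    have : b \ P = b := Finset.eq_of_subset_of_card_le htb (by omega)
    exact hY b hb ((this ▸ hts).trans hQ)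
  · -- 1 + 2
    obtain ⟨z, hz⟩ := Finset.card_eq_one.mp h
    have ht2 : (b \ P).card = 2 := by omega
    obtain ⟨x, y, hxy, hxyeq⟩ := Finset.card_eq_two.mp ht2
    have hxQ : x ∈ b \ P := hxyeq ▸ by simp
    have hyQ : y ∈ b \ P := hxyeq ▸ by simp
    have hzP : z ∈ b ∩ P := hz ▸ by simp
    exact H2 x (hts hxQ) y (hts hyQ) hxy z (hsP hzP) b hb ⟨htb hxQ, htb hyQ, hsb hzP⟩
  · -- 2 + 1
    obtain ⟨x, y, hxy, hxyeq⟩ := Finset.card_eq_two.mp h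
    have ht1 : (b \ P).card = 1 := by omega
    obtain ⟨z, hz⟩ := Finset.card_eq_one.mp ht1
    have hxP : x ∈ b ∩ P := hxyeq ▸ by simp
    have hyP : y ∈ b ∩ P := hxyeq ▸ by simp
    have hzQ : z ∈ b \ P := hz ▸ by simp
    exact H1 x (hsP hxP) y (hsP hyP) hxy z (hts hzQ) b hb ⟨hsb hxP, hsb hyP, htb hzQ⟩
  · -- b ⊆ P ⊆ X
    have : b ∩ P = b := Finset.eq_of_subset_of_card_le hsb (by omega)
    exact hX b hb (((Finset.inter_eq_left.mp this)).trans hP)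

lemma dne {X Y : Finset α} (h : Disjoint X Y) {x y : α} (hx : x ∈ X) (hy : y ∈ Y) : x ≠ y :=
  fun he => (Finset.disjoint_left.mp h hx (he ▸ hy))
lemma card2 {x y : α} (h : x ≠ y) : ({x, y} : Finset α).card = 2 := by
  rw [Finset.card_insert_of_notMem (by simp [h]), Finset.card_singleton]
lemma card3 {x y z : α} (hxy : x ≠ y) (hxz : x ≠ z) (hyz : y ≠ z) :
    ({x, y, z} : Finset α).card = 3 := by
  rw [Finset.card_insert_of_notMem (by simp [hxy, hxz]), card2 hyz]

lemma card4 {x y z w : α} (hxy : x ≠ y) (hxz : x ≠ z) (hxw : x ≠ w)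
    (hyz : y ≠ z) (hyw : y ≠ w) (hzw : z ≠ w) : ({x, y, z, w} : Finset α).card = 4 := by
  rw [Finset.card_insert_of_notMem (by simp [hxy, hxz, hxw]), card3 hyz hyw hzw]
lemma nb_of_block {points : Finset α} {blocks : Finset (Finset α)} (hS : IsSTS points blocks)
    {x y z : α} (hx : x ∈ points) (hy : y ∈ points) (hxy : x ≠ y)
    {bl : Finset α} (hbl : bl ∈ blocks) (h1 : x ∈ bl) (h2 : y ∈ bl) (hz : z ∉ bl) :
    NB blocks x y z := by
  rintro b hb ⟨hxb, hyb, hzb⟩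
  obtain ⟨bb, -, huniq⟩ := hS.2 x hx y hy hxy
  have : b = bl := (huniq b ⟨hb, hxb, hyb⟩).trans (huniq bl ⟨hbl, h1, h2⟩).symm
  exact hz (this ▸ hzb)
lemma cle1 (x : α) : ({x} : Finset α).card ≤ 1 := by simp
lemma cle2 (x y : α) : ({x, y} : Finset α).card ≤ 2 :=
  le_trans (Finset.card_insert_le _ _) (Nat.succ_le_succ (cle1 y))
lemma cle3 (x y z : α) : ({x, y, z} : Finset α).card ≤ 3 :=
  le_trans (Finset.card_insert_le _ _) (Nat.succ_le_succ (cle2 y z))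
lemma cle5 (x y z w v : α) : ({x, y, z, w, v} : Finset α).card ≤ 5 :=
  le_trans (Finset.card_insert_le _ _) (Nat.succ_le_succ
    (le_trans (Finset.card_insert_le _ _) (Nat.succ_le_succ (cle3 z w v))))
lemma cle6 (x y z w v u : α) : ({x, y, z, w, v, u} : Finset α).card ≤ 6 :=
  le_trans (Finset.card_insert_le _ _) (Nat.succ_le_succ (cle5 y z w v u))
lemma mso (n : ℕ) : n * n - n = n * (n - 1) := by
  cases n with
  | zero => rfl
  | succ k => rw [Nat.succ_sub_one, Nat.mul_succ, Nat.add_sub_cancel]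
lemma pair_sum {points : Finset α} {blocks : Finset (Finset α)} (hS : IsSTS points blocks)
    {X Y : Finset α} (hX : X ⊆ points) (hY : Y ⊆ points) (hXY : Disjoint X Y) :
    ∑ bl ∈ blocks, (bl ∩ X).card * (bl ∩ Y).card = X.card * Y.card := by
  have hcover : X ×ˢ Y = blocks.biUnion (fun bl => (bl ∩ X) ×ˢ (bl ∩ Y)) := by
    ext ⟨x, y⟩
    simp only [Finset.mem_product, Finset.mem_biUnion, Finset.mem_inter]
    constructor
    · rintro ⟨hx, hy⟩
      have hxy : x ≠ y := fun h => Finset.disjoint_left.mp hXY hx (h ▸ hy)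
      obtain ⟨b0, ⟨hb0, hxb0, hyb0⟩, -⟩ := hS.2 x (hX hx) y (hY hy) hxy
      exact ⟨b0, hb0, ⟨hxb0, hx⟩, ⟨hyb0, hy⟩⟩
    · rintro ⟨bl, hbl, ⟨-, hx⟩, ⟨-, hy⟩⟩; exact ⟨hx, hy⟩
  have hdisj : ∀ bl1 ∈ blocks, ∀ bl2 ∈ blocks, bl1 ≠ bl2 →
      Disjoint ((bl1 ∩ X) ×ˢ (bl1 ∩ Y)) ((bl2 ∩ X) ×ˢ (bl2 ∩ Y)) := by
    intro bl1 h1 bl2 h2 hne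
    rw [Finset.disjoint_left]
    rintro ⟨x, y⟩ hp1 hp2
    simp only [Finset.mem_product, Finset.mem_inter] at hp1 hp2
    have hxy : x ≠ y := fun h => Finset.disjoint_left.mp hXY hp1.1.2 (h ▸ hp1.2.2)
    obtain ⟨b0, -, huniq⟩ := hS.2 x (hX hp1.1.2) y (hY hp1.2.2) hxy
    exact hne ((huniq bl1 ⟨h1, hp1.1.1, hp1.2.1⟩).trans (huniq bl2 ⟨h2, hp2.1.1, hp2.2.1⟩).symm)
  calc ∑ bl ∈ blocks, (bl ∩ X).card * (bl ∩ Y).card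
      = ∑ bl ∈ blocks, ((bl ∩ X) ×ˢ (bl ∩ Y)).card := by
        refine Finset.sum_congr rfl fun bl _ => ?_
        rw [Finset.card_product]
    _ = (blocks.biUnion (fun bl => (bl ∩ X) ×ˢ (bl ∩ Y))).card := (Finset.card_biUnion hdisj).symm
    _ = (X ×ˢ Y).card := by rw [← hcover]
    _ = X.card * Y.card := Finset.card_product X Y
lemma offdiag_sum {points : Finset α} {blocks : Finset (Finset α)} (hS : IsSTS points blocks)
    {X : Finset α} (hX : X ⊆ points) :
    ∑ bl ∈ blocks, (bl ∩ X).card * ((bl ∩ X).card - 1) = X.card * (X.card - 1) := by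
  have hcover : X.offDiag = blocks.biUnion (fun bl => (bl ∩ X).offDiag) := by
    ext ⟨x, y⟩
    simp only [Finset.mem_offDiag, Finset.mem_biUnion, Finset.mem_inter]
    constructor
    · rintro ⟨hx, hy, hxy⟩
      obtain ⟨b0, ⟨hb0, hxb0, hyb0⟩, -⟩ := hS.2 x (hX hx) y (hX hy) hxy
      exact ⟨b0, hb0, ⟨hxb0, hx⟩, ⟨hyb0, hy⟩, hxy⟩
    · rintro ⟨bl, hbl, ⟨-, hx⟩, ⟨-, hy⟩, hxy⟩; exact ⟨hx, hy, hxy⟩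
  have hdisj : ∀ bl1 ∈ blocks, ∀ bl2 ∈ blocks, bl1 ≠ bl2 →
      Disjoint ((bl1 ∩ X)).offDiag ((bl2 ∩ X)).offDiag := by
    intro bl1 h1 bl2 h2 hne
    rw [Finset.disjoint_left]
    rintro ⟨x, y⟩ hp1 hp2
    simp only [Finset.mem_offDiag, Finset.mem_inter] at hp1 hp2
    obtain ⟨b0, -, huniq⟩ := hS.2 x (hX hp1.1.2) y (hX hp1.2.1.2) hp1.2.2
    exact hne ((huniq bl1 ⟨h1, hp1.1.1, hp1.2.1.1⟩).trans (huniq bl2 ⟨h2, hp2.1.1, hp2.2.1.1⟩).symm)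
  calc ∑ bl ∈ blocks, (bl ∩ X).card * ((bl ∩ X).card - 1)
      = ∑ bl ∈ blocks, ((bl ∩ X)).offDiag.card := by
        refine Finset.sum_congr rfl fun bl _ => ?_
        rw [Finset.offDiag_card]
        exact (mso _).symm
    _ = (blocks.biUnion (fun bl => (bl ∩ X).offDiag)).card := (Finset.card_biUnion hdisj).symm
    _ = X.offDiag.card := by rw [← hcover]
    _ = X.card * (X.card - 1) := by rw [Finset.offDiag_card]; exact mso _
lemma blocks_card {points : Finset α} {blocks : Finset (Finset α)} (hS : IsSTS points blocks)
    (hv : points.card = 21) : blocks.card = 70 := by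
  have h := offdiag_sum hS (Finset.Subset.refl points)
  rw [hv] at h
  have h2 : ∀ bl ∈ blocks, (bl ∩ points).card * ((bl ∩ points).card - 1) = 6 := by
    intro bl hbl
    rw [Finset.inter_eq_left.mpr (hS.1 bl hbl).1, (hS.1 bl hbl).2]
  rw [Finset.sum_congr rfl h2, Finset.sum_const, smul_eq_mul] at h
  omega
lemma abc_card {points : Finset α} {blocks : Finset (Finset α)} (hS : IsSTS points blocks)
    (hv : points.card = 21) {A B C : Finset α}
    (hABC : A ∪ B ∪ C = points) (dAB : Disjoint A B) (dAC : Disjoint A C) (dBC : Disjoint B C)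
    (iA : IsIndep blocks A) (iB : IsIndep blocks B) (iC : IsIndep blocks C)
    (hA : A.card = 8) (hB : B.card = 7) (hC : C.card = 6) :
    (blocks.filter (fun bl => (bl ∩ A).card = 1 ∧ (bl ∩ B).card = 1 ∧ (bl ∩ C).card = 1)).card
      = 6 := by
  have hAp : A ⊆ points := hABC ▸ (Finset.subset_union_left.trans Finset.subset_union_left)
  have hBp : B ⊆ points := hABC ▸ (Finset.subset_union_right.trans Finset.subset_union_left)
  have hCp : C ⊆ points := hABC ▸ Finset.subset_union_right
  -- pointwise facts
  have hpart : ∀ bl ∈ blocks,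
      (bl ∩ A).card + (bl ∩ B).card + (bl ∩ C).card = 3 := by
    intro bl hbl
    have h1 : bl ∩ A ∪ (bl ∩ B ∪ bl ∩ C) = bl := by
      rw [← Finset.inter_union_distrib_left, ← Finset.inter_union_distrib_left,
        Finset.union_assoc] at *
      rw [← Finset.union_assoc, hABC] at *
      exact Finset.inter_eq_left.mpr (hS.1 bl hbl).1
    have d1 : Disjoint (bl ∩ B) (bl ∩ C) :=
      (dBC.mono Finset.inter_subset_right Finset.inter_subset_right)
    have d2 : Disjoint (bl ∩ A) (bl ∩ B ∪ bl ∩ C) := by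
      refine Finset.disjoint_union_right.mpr ⟨?_, ?_⟩
      · exact dAB.mono Finset.inter_subset_right Finset.inter_subset_right
      · exact dAC.mono Finset.inter_subset_right Finset.inter_subset_right
    have := Finset.card_union_of_disjoint d2
    rw [h1, Finset.card_union_of_disjoint d1, (hS.1 bl hbl).2] at this
    omega
  have hle : ∀ bl ∈ blocks, ∀ X : Finset α, IsIndep blocks X → (bl ∩ X).card ≤ 2 := by
    intro bl hbl X iX
    by_contra h
    push_neg at h
    have h3 : (bl ∩ X).card = 3 := le_antisymm (by
      have : (bl ∩ X).card ≤ bl.card := Finset.card_le_card Finset.inter_subset_left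
      rw [(hS.1 bl hbl).2] at this; exact this) h
    have : bl ∩ X = bl := Finset.eq_of_subset_of_card_le Finset.inter_subset_left
      (by rw [(hS.1 bl hbl).2, h3])
    exact iX bl hbl (Finset.inter_eq_left.mp this)
  -- pointwise identity
  have hpoint : ∀ bl ∈ blocks,
      2 * ((bl ∩ A).card * (bl ∩ B).card + (bl ∩ A).card * (bl ∩ C).card
        + (bl ∩ B).card * (bl ∩ C).card)
      = ((bl ∩ A).card * ((bl ∩ A).card - 1) + (bl ∩ B).card * ((bl ∩ B).card - 1)
        + (bl ∩ C).card * ((bl ∩ C).card - 1)) + 2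
        + (if (bl ∩ A).card = 1 ∧ (bl ∩ B).card = 1 ∧ (bl ∩ C).card = 1 then 4 else 0) := by
    intro bl hbl
    have h1 := hpart bl hbl
    have h2 := hle bl hbl A iA
    have h3 := hle bl hbl B iB
    have h4 := hle bl hbl C iC
    set a := (bl ∩ A).card with ha
    set b := (bl ∩ B).card with hbq
    set c := (bl ∩ C).card with hc
    clear_value a b c
    interval_cases a <;> interval_cases b <;> interval_cases c <;> simp <;> omega
  have hsum := Finset.sum_congr rfl hpoint
  rw [← Finset.mul_sum] at hsum
  simp only [Finset.sum_add_distrib] at hsum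
  rw [Finset.sum_const, smul_eq_mul, blocks_card hS hv,
    pair_sum hS hAp hBp dAB, pair_sum hS hAp hCp dAC, pair_sum hS hBp hCp dBC,
    offdiag_sum hS hAp, offdiag_sum hS hBp, offdiag_sum hS hCp,
    ← Finset.sum_filter, Finset.sum_const, smul_eq_mul, hA, hB, hC] at hsum
  omega

lemma T_decomp {points : Finset α} {blocks : Finset (Finset α)} (hS : IsSTS points blocks)
    {A B C : Finset α} (hABC : A ∪ B ∪ C = points)
    {bl : Finset α}
    (h : bl ∈ blocks.filter
      (fun bl => (bl ∩ A).card = 1 ∧ (bl ∩ B).card = 1 ∧ (bl ∩ C).card = 1)) :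
    ∃ a b c, a ∈ A ∧ b ∈ B ∧ c ∈ C ∧ bl = {a, b, c} := by
  rw [Finset.mem_filter] at h
  obtain ⟨hbl, h1, h2, h3⟩ := h
  obtain ⟨a, ha⟩ := Finset.card_eq_one.mp h1
  obtain ⟨b, hb⟩ := Finset.card_eq_one.mp h2
  obtain ⟨c, hc⟩ := Finset.card_eq_one.mp h3
  have haA : a ∈ bl ∩ A := ha ▸ Finset.mem_singleton_self a
  have hbB : b ∈ bl ∩ B := hb ▸ Finset.mem_singleton_self b
  have hcC : c ∈ bl ∩ C := hc ▸ Finset.mem_singleton_self c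
  rw [Finset.mem_inter] at haA hbB hcC
  refine ⟨a, b, c, haA.2, hbB.2, hcC.2, ?_⟩
  apply Finset.Subset.antisymm
  · intro x hx
    have hxp : x ∈ A ∪ B ∪ C := hABC ▸ (hS.1 bl hbl).1 hx
    simp only [Finset.mem_union] at hxp
    simp only [Finset.mem_insert, Finset.mem_singleton]
    rcases hxp with (hxA | hxB) | hxC
    · have : x ∈ bl ∩ A := Finset.mem_inter.mpr ⟨hx, hxA⟩
      rw [ha, Finset.mem_singleton] at this; tauto
    · have : x ∈ bl ∩ B := Finset.mem_inter.mpr ⟨hx, hxB⟩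
      rw [hb, Finset.mem_singleton] at this; tauto
    · have : x ∈ bl ∩ C := Finset.mem_inter.mpr ⟨hx, hxC⟩
      rw [hc, Finset.mem_singleton] at this; tauto
  · intro x hx
    simp only [Finset.mem_insert, Finset.mem_singleton] at hx
    rcases hx with rfl | rfl | rfl
    · exact haA.1
    · exact hbB.1
    · exact hcC.1
lemma trichotomy {points : Finset α} {blocks : Finset (Finset α)} (hS : IsSTS points blocks)
    (hv : points.card = 21) {A B C : Finset α}
    (hABC : A ∪ B ∪ C = points) (dAB : Disjoint A B) (dAC : Disjoint A C) (dBC : Disjoint B C)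
    (iA : IsIndep blocks A) (iB : IsIndep blocks B) (iC : IsIndep blocks C)
    (hA : A.card = 8) (hB : B.card = 7) (hC : C.card = 6) :
    (∃ a1 b1 c1 a2 b2 c2, a1 ∈ A ∧ b1 ∈ B ∧ c1 ∈ C ∧ a2 ∈ A ∧ b2 ∈ B ∧ c2 ∈ C ∧
      b1 ≠ b2 ∧ c1 ≠ c2 ∧ ({a1, b1, c1} : Finset α) ∈ blocks ∧
      ({a2, b2, c2} : Finset α) ∈ blocks)
    ∨ (∃ b0 ∈ B, ∀ c ∈ C, ∃ a ∈ A, ({a, b0, c} : Finset α) ∈ blocks)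
    ∨ (∃ c0 ∈ C, ∃ G : Finset α, G ⊆ B ∧ G.card = 6 ∧
        ∀ b ∈ G, ∃ a ∈ A, ({a, b, c0} : Finset α) ∈ blocks) := by
  have hAp : A ⊆ points := hABC ▸ (Finset.subset_union_left.trans Finset.subset_union_left)
  have hBp : B ⊆ points := hABC ▸ (Finset.subset_union_right.trans Finset.subset_union_left)
  have hCp : C ⊆ points := hABC ▸ Finset.subset_union_right
  set T := blocks.filter
      (fun bl => (bl ∩ A).card = 1 ∧ (bl ∩ B).card = 1 ∧ (bl ∩ C).card = 1) with hTdef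
  have hT6 : T.card = 6 := abc_card hS hv hABC dAB dAC dBC iA iB iC hA hB hC
  have hTb : ∀ bl ∈ T, bl ∈ blocks := fun bl h => (Finset.mem_filter.mp h).1
  by_cases hcase1 : ∃ a1 b1 c1 a2 b2 c2, a1 ∈ A ∧ b1 ∈ B ∧ c1 ∈ C ∧ a2 ∈ A ∧ b2 ∈ B ∧ c2 ∈ C ∧
      b1 ≠ b2 ∧ c1 ≠ c2 ∧ ({a1, b1, c1} : Finset α) ∈ blocks ∧
      ({a2, b2, c2} : Finset α) ∈ blocks
  · exact Or.inl hcase1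
  have hnc : ∀ a1 b1 c1 a2 b2 c2 : α, a1 ∈ A → b1 ∈ B → c1 ∈ C → a2 ∈ A → b2 ∈ B → c2 ∈ C →
      ({a1, b1, c1} : Finset α) ∈ blocks → ({a2, b2, c2} : Finset α) ∈ blocks →
      b1 = b2 ∨ c1 = c2 := by
    intro a1 b1 c1 a2 b2 c2 h1 h2 h3 h4 h5 h6 h7 h8
    by_contra h
    push_neg at h
    exact hcase1 ⟨a1, b1, c1, a2, b2, c2, h1, h2, h3, h4, h5, h6, h.1, h.2, h7, h8⟩
  have hTne : T.Nonempty := Finset.card_pos.mp (by omega)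
  obtain ⟨bl0, hbl0T⟩ := hTne
  obtain ⟨a0, b0, c0, ha0, hb0, hc0, hdec0⟩ := T_decomp hS hABC hbl0T
  have hbl0blocks : ({a0, b0, c0} : Finset α) ∈ blocks := hdec0 ▸ hTb bl0 hbl0T
  by_cases hstarb : ∀ bl ∈ T, b0 ∈ bl
  · -- star through b0
    refine Or.inr (Or.inl ⟨b0, hb0, ?_⟩)
    have hinterC : ∀ bl ∈ T, ∀ a b c : α, a ∈ A → b ∈ B → c ∈ C → bl = {a, b, c} →
        bl ∩ C = {c} := by
      intro bl hblT a b c ha hb hc hdec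
      subst hdec
      ext x
      simp only [Finset.mem_inter, Finset.mem_insert, Finset.mem_singleton]
      constructor
      · rintro ⟨rfl | rfl | rfl, hxC⟩
        · exact absurd rfl (dne dAC ha hxC)
        · exact absurd rfl (dne dBC hb hxC)
        · rfl
      · rintro rfl; exact ⟨Or.inr (Or.inr rfl), hc⟩
    have hUV : T.image (fun bl => bl ∩ C) ⊆ C.image (fun c => ({c} : Finset α)) := by
      intro s hs
      rw [Finset.mem_image] at hs
      obtain ⟨bl, hblT, rfl⟩ := hs
      obtain ⟨a, b, c, ha, hb, hc, hdec⟩ := T_decomp hS hABC hblT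
      rw [hinterC bl hblT a b c ha hb hc hdec]
      exact Finset.mem_image_of_mem _ hc
    have hUcard : (T.image (fun bl => bl ∩ C)).card = 6 := by
      rw [Finset.card_image_of_injOn, hT6]
      intro bl1 h1 bl2 h2 heq
      obtain ⟨x1, y1, z1, hx1, hy1, hz1, hd1⟩ := T_decomp hS hABC h1
      obtain ⟨x2, y2, z2, hx2, hy2, hz2, hd2⟩ := T_decomp hS hABC h2
      have e1 : bl1 ∩ C = {z1} := hinterC bl1 h1 x1 y1 z1 hx1 hy1 hz1 hd1
      have e2 : bl2 ∩ C = {z2} := hinterC bl2 h2 x2 y2 z2 hx2 hy2 hz2 hd2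
      have hz12 : z1 = z2 := Finset.singleton_injective (e1 ▸ e2 ▸ heq)
      have hzb : b0 ≠ z1 := dne dBC hb0 hz1
      obtain ⟨bb, -, huniq⟩ := hS.2 b0 (hBp hb0) z1 (hCp hz1) hzb
      have m1 : z1 ∈ bl1 := by rw [hd1]; simp
      have m2 : z1 ∈ bl2 := by rw [hd2, ← hz12] at *; simp [hz12]
      exact (huniq bl1 ⟨hTb bl1 h1, hstarb bl1 h1, m1⟩).trans
        (huniq bl2 ⟨hTb bl2 h2, hstarb bl2 h2, m2⟩).symm
    have hVcard : (C.image (fun c => ({c} : Finset α))).card = 6 := by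
      rw [Finset.card_image_of_injOn (Finset.singleton_injective.injOn), hC]
    have hUV2 : T.image (fun bl => bl ∩ C) = C.image (fun c => ({c} : Finset α)) :=
      Finset.eq_of_subset_of_card_le hUV (by omega)
    intro c hc
    have : ({c} : Finset α) ∈ T.image (fun bl => bl ∩ C) := by
      rw [hUV2]; exact Finset.mem_image_of_mem _ hc
    rw [Finset.mem_image] at this
    obtain ⟨bl, hblT, hbleq⟩ := this
    obtain ⟨a, b, c', ha, hb, hc', hdec⟩ := T_decomp hS hABC hblT
    have e1 : bl ∩ C = {c'} := hinterC bl hblT a b c' ha hb hc' hdec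
    have hcc : c' = c := Finset.singleton_injective (e1 ▸ hbleq)
    subst hcc
    have hmem : b0 ∈ bl := hstarb bl hblT
    rw [hdec] at hmem
    simp only [Finset.mem_insert, Finset.mem_singleton] at hmem
    rcases hmem with rfl | rfl | rfl
    · exact absurd rfl (dne dAB ha hb0)
    · exact ⟨a, ha, hdec ▸ hTb bl hblT⟩
    · exact absurd rfl ((dne dBC hb0 hc').symm)
  · -- star through c0
    push_neg at hstarb
    obtain ⟨bl1, hbl1T, hnb0⟩ := hstarb
    obtain ⟨a1, b1, c1, ha1, hb1, hc1, hdec1⟩ := T_decomp hS hABC hbl1T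
    have hbl1blocks : ({a1, b1, c1} : Finset α) ∈ blocks := hdec1 ▸ hTb bl1 hbl1T
    have hb01 : b0 ≠ b1 := by
      rintro rfl
      apply hnb0
      rw [hdec1]; simp
    have hc01 : c0 = c1 :=
      (hnc a0 b0 c0 a1 b1 c1 ha0 hb0 hc0 ha1 hb1 hc1 hbl0blocks hbl1blocks).resolve_left hb01
    have hall : ∀ bl ∈ T, c0 ∈ bl := by
      intro bl hblT
      obtain ⟨a2, b2, c2, ha2, hb2, hc2, hdec2⟩ := T_decomp hS hABC hblT
      have hbl2blocks : ({a2, b2, c2} : Finset α) ∈ blocks := hdec2 ▸ hTb bl hblT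
      rcases hnc a2 b2 c2 a0 b0 c0 ha2 hb2 hc2 ha0 hb0 hc0 hbl2blocks hbl0blocks with hbb | hcc
      · rcases hnc a2 b2 c2 a1 b1 c1 ha2 hb2 hc2 ha1 hb1 hc1 hbl2blocks hbl1blocks with hbb1 | hcc1
        · exact absurd (hbb ▸ hbb1 : b0 = b1) hb01
        · rw [hdec2, hc01, ← hcc1]; simp
      · rw [hdec2, ← hcc]; simp
    refine Or.inr (Or.inr ⟨c0, hc0, T.biUnion (fun bl => bl ∩ B), ?_, ?_, ?_⟩)
    · intro x hx
      rw [Finset.mem_biUnion] at hx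
      obtain ⟨bl, -, hxx⟩ := hx
      exact (Finset.mem_inter.mp hxx).2
    · rw [Finset.card_biUnion]
      · have : ∀ bl ∈ T, (bl ∩ B).card = 1 := fun bl h => (Finset.mem_filter.mp h).2.2.1
        rw [Finset.sum_congr rfl this, Finset.sum_const, smul_eq_mul, hT6]
      · intro bl1' h1 bl2' h2 hne
        rw [Function.onFun, Finset.disjoint_left]
        intro x hx1 hx2
        rw [Finset.mem_inter] at hx1 hx2
        have hxc : x ≠ c0 := dne dBC hx1.2 hc0
        obtain ⟨bb, -, huniq⟩ := hS.2 x (hBp hx1.2) c0 (hCp hc0) hxc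
        exact hne ((huniq bl1' ⟨hTb bl1' h1, hx1.1, hall bl1' h1⟩).trans
          (huniq bl2' ⟨hTb bl2' h2, hx2.1, hall bl2' h2⟩).symm)
    · intro b hb
      rw [Finset.mem_biUnion] at hb
      obtain ⟨bl, hblT, hbb⟩ := hb
      rw [Finset.mem_inter] at hbb
      obtain ⟨a2, b2, c2, ha2, hb2, hc2, hdec2⟩ := T_decomp hS hABC hblT
      have hcc : c0 = c2 := by
        have := hall bl hblT
        rw [hdec2] at this
        simp only [Finset.mem_insert, Finset.mem_singleton] at this
        rcases this with rfl | rfl | rfl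
        · exact absurd rfl ((dne dAC ha2 hc0).symm)
        · exact absurd rfl ((dne dBC hb2 hc0).symm)
        · rfl
      have hbb2 : b = b2 := by
        have := hbb.1
        rw [hdec2] at this
        simp only [Finset.mem_insert, Finset.mem_singleton] at this
        rcases this with rfl | rfl | rfl
        · exact absurd rfl (dne dAB ha2 hbb.2)
        · rfl
        · exact absurd rfl ((dne dBC hbb.2 hc2).symm)
      refine ⟨a2, ha2, ?_⟩
      rw [hbb2, hcc]
      exact hdec2 ▸ hTb bl hblT

lemma bcd {points : Finset α} {blocks : Finset (Finset α)} (hS : IsSTS points blocks)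
    {A B C : Finset α}
    (hABC : A ∪ B ∪ C = points) (dAB : Disjoint A B) (dAC : Disjoint A C) (dBC : Disjoint B C)
    (hB : B.card = 7) (hC : C.card = 6)
    (htri :
      (∃ a1 b1 c1 a2 b2 c2, a1 ∈ A ∧ b1 ∈ B ∧ c1 ∈ C ∧ a2 ∈ A ∧ b2 ∈ B ∧ c2 ∈ C ∧
        b1 ≠ b2 ∧ c1 ≠ c2 ∧ ({a1, b1, c1} : Finset α) ∈ blocks ∧
        ({a2, b2, c2} : Finset α) ∈ blocks)
      ∨ (∃ b0 ∈ B, ∀ c ∈ C, ∃ a ∈ A, ({a, b0, c} : Finset α) ∈ blocks)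
      ∨ (∃ c0 ∈ C, ∃ G : Finset α, G ⊆ B ∧ G.card = 6 ∧
          ∀ b ∈ G, ∃ a ∈ A, ({a, b, c0} : Finset α) ∈ blocks)) :
    ∃ b4 b5 b6 b7 c1 c2 c3 c4 : α,
      b4 ∈ B ∧ b5 ∈ B ∧ b6 ∈ B ∧ b7 ∈ B ∧
      c1 ∈ C ∧ c2 ∈ C ∧ c3 ∈ C ∧ c4 ∈ C ∧
      b4 ≠ b5 ∧ b4 ≠ b6 ∧ b4 ≠ b7 ∧ b5 ≠ b6 ∧ b5 ≠ b7 ∧ b6 ≠ b7 ∧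
      c1 ≠ c2 ∧ c1 ≠ c3 ∧ c1 ≠ c4 ∧ c2 ≠ c3 ∧ c2 ≠ c4 ∧ c3 ≠ c4 ∧
      NB blocks b4 b5 c1 ∧ NB blocks b4 b6 c1 ∧ NB blocks b4 b7 c1 ∧
      NB blocks b5 b6 c1 ∧ NB blocks b5 b7 c1 ∧ NB blocks b6 b7 c1 ∧
      NB blocks b5 b6 c2 ∧ NB blocks b5 b7 c2 ∧ NB blocks b6 b7 c2 ∧
      NB blocks b6 b7 c3 ∧
      NB blocks c1 c2 b5 ∧ NB blocks c1 c2 b6 ∧ NB blocks c1 c2 b7 ∧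
      NB blocks c1 c3 b6 ∧ NB blocks c1 c3 b7 ∧ NB blocks c2 c3 b6 ∧ NB blocks c2 c3 b7 ∧
      NB blocks c1 c4 b7 ∧ NB blocks c2 c4 b7 ∧ NB blocks c3 c4 b7 := by
  have hBp : B ⊆ points := hABC ▸ (Finset.subset_union_right.trans Finset.subset_union_left)
  have hCp : C ⊆ points := hABC ▸ Finset.subset_union_right
  rcases htri with ⟨x1, y1, z1, x2, y2, z2, hx1A, hy1B, hz1C, hx2A, hy2B, hz2C, hyy, hzz,
      hβ1, hβ2⟩ | ⟨b0, hb0B, hstar⟩ | ⟨c0, hc0C, G, hGB, hG6, hstar⟩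
  · -- CASE 1 : two independent ABC blocks
    have auto1 : ∀ z : α, z ≠ x1 → z ≠ y1 → z ≠ z1 → NB blocks y1 z1 z := fun z h1 h2 h3 =>
      nb_of_block hS (hBp hy1B) (hCp hz1C) (dne dBC hy1B hz1C) hβ1 (by simp) (by simp)
        (by simp [h1, h2, h3])
    have auto2 : ∀ z : α, z ≠ x2 → z ≠ y2 → z ≠ z2 → NB blocks y2 z2 z := fun z h1 h2 h3 =>
      nb_of_block hS (hBp hy2B) (hCp hz2C) (dne dBC hy2B hz2C) hβ2 (by simp) (by simp)
        (by simp [h1, h2, h3])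
    -- pick c3
    have hsub12 : ({z1, z2} : Finset α) ⊆ C := by
      simp [Finset.insert_subset_iff, hz1C, hz2C]
    have hcard12 : (C \ {z1, z2}).card = 4 := by
      rw [Finset.card_sdiff_of_subset hsub12, card2 hzz, hC]
    obtain ⟨c3, hc3S, hc3F⟩ := pick
      (show ({th blocks y2 y1, th blocks y2 z1, th blocks y1 z2} : Finset α).card
        < (C \ ({z1, z2} : Finset α)).card from
        lt_of_le_of_lt (cle3 _ _ _) (by rw [hcard12]; norm_num))
    rw [Finset.mem_sdiff] at hc3S
    obtain ⟨hc3C, hc3ni⟩ := hc3S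
    simp only [Finset.mem_insert, Finset.mem_singleton, not_or] at hc3ni hc3F
    obtain ⟨hc31, hc32⟩ := hc3ni
    obtain ⟨hF1, hF2, hF3⟩ := hc3F
    have f10 : NB blocks y2 y1 c3 :=
      nb_of_ne hS (hBp hy2B) (hBp hy1B) hyy.symm (dne dBC hy2B hc3C).symm
        (dne dBC hy1B hc3C).symm hF1
    have f14 : NB blocks z1 c3 y2 :=
      (nb_of_ne hS (hBp hy2B) (hCp hz1C) (dne dBC hy2B hz1C) (dne dBC hy2B hc3C).symm hc31
        hF2).p231
    have f17 : NB blocks z2 c3 y1 :=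
      (nb_of_ne hS (hBp hy1B) (hCp hz2C) (dne dBC hy1B hz2C) (dne dBC hy1B hc3C).symm hc32
        hF3).p231
    -- pick b5
    have hsubyy : ({y2, y1} : Finset α) ⊆ B := by
      simp [Finset.insert_subset_iff, hy1B, hy2B]
    have hcardyy : (B \ {y2, y1}).card = 5 := by
      rw [Finset.card_sdiff_of_subset hsubyy, card2 hyy.symm, hB]
    obtain ⟨b5, hb5S, hb5F⟩ := pick
      (show ({th blocks y2 z1, th blocks y1 z2, th blocks z1 z2} : Finset α).card
        < (B \ ({y2, y1} : Finset α)).card from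
        lt_of_le_of_lt (cle3 _ _ _) (by rw [hcardyy]; norm_num))
    rw [Finset.mem_sdiff] at hb5S
    obtain ⟨hb5B, hb5ni⟩ := hb5S
    simp only [Finset.mem_insert, Finset.mem_singleton, not_or] at hb5ni hb5F
    obtain ⟨hb56, hb57⟩ := hb5ni
    obtain ⟨hG1, hG2, hG3⟩ := hb5F
    have f4 : NB blocks b5 y2 z1 :=
      (nb_of_ne hS (hBp hy2B) (hCp hz1C) (dne dBC hy2B hz1C) hb56 (dne dBC hb5B hz1C)
        hG1).p312
    have f8 : NB blocks b5 y1 z2 :=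
      (nb_of_ne hS (hBp hy1B) (hCp hz2C) (dne dBC hy1B hz2C) hb57 (dne dBC hb5B hz2C)
        hG2).p312
    have f11 : NB blocks z1 z2 b5 :=
      nb_of_ne hS (hCp hz1C) (hCp hz2C) hzz (dne dBC hb5B hz1C) (dne dBC hb5B hz2C) hG3
    -- pick c4
    have hsub123 : ({z1, z2, c3} : Finset α) ⊆ C := by
      simp [Finset.insert_subset_iff, hz1C, hz2C, hc3C]
    have hcard123 : (C \ {z1, z2, c3}).card = 3 := by
      rw [Finset.card_sdiff_of_subset hsub123, card3 hzz (Ne.symm hc31) (Ne.symm hc32), hC]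
    obtain ⟨c4, hc4S, hc4F⟩ := pick
      (show ({th blocks y1 z2, th blocks y1 c3} : Finset α).card
        < (C \ ({z1, z2, c3} : Finset α)).card from
        lt_of_le_of_lt (cle2 _ _) (by rw [hcard123]; norm_num))
    rw [Finset.mem_sdiff] at hc4S
    obtain ⟨hc4C, hc4ni⟩ := hc4S
    simp only [Finset.mem_insert, Finset.mem_singleton, not_or] at hc4ni hc4F
    obtain ⟨hc41, hc42, hc43⟩ := hc4ni
    obtain ⟨hH1, hH2⟩ := hc4F
    have f19 : NB blocks z2 c4 y1 :=
      (nb_of_ne hS (hBp hy1B) (hCp hz2C) (dne dBC hy1B hz2C) (dne dBC hy1B hc4C).symm hc42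
        hH1).p231
    have f20 : NB blocks c3 c4 y1 :=
      (nb_of_ne hS (hBp hy1B) (hCp hc3C) (dne dBC hy1B hc3C) (dne dBC hy1B hc4C).symm hc43
        hH2).p231
    -- pick b4
    have hsubb : ({b5, y2, y1} : Finset α) ⊆ B := by
      simp [Finset.insert_subset_iff, hb5B, hy1B, hy2B]
    have hcardb : (B \ {b5, y2, y1}).card = 4 := by
      rw [Finset.card_sdiff_of_subset hsubb, card3 hb56 hb57 hyy.symm, hB]
    obtain ⟨b4, hb4S, hb4F⟩ := pick
      (show ({th blocks b5 z1, th blocks y2 z1} : Finset α).card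
        < (B \ ({b5, y2, y1} : Finset α)).card from
        lt_of_le_of_lt (cle2 _ _) (by rw [hcardb]; norm_num))
    rw [Finset.mem_sdiff] at hb4S
    obtain ⟨hb4B, hb4ni⟩ := hb4S
    simp only [Finset.mem_insert, Finset.mem_singleton, not_or] at hb4ni hb4F
    obtain ⟨hb45, hb46, hb47⟩ := hb4ni
    obtain ⟨hI1, hI2⟩ := hb4F
    have f1 : NB blocks b4 b5 z1 :=
      (nb_of_ne hS (hBp hb5B) (hCp hz1C) (dne dBC hb5B hz1C) hb45 (dne dBC hb4B hz1C)
        hI1).p312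
    have f2 : NB blocks b4 y2 z1 :=
      (nb_of_ne hS (hBp hy2B) (hCp hz1C) (dne dBC hy2B hz1C) hb46 (dne dBC hb4B hz1C)
        hI2).p312
    -- auto facts
    have f3 : NB blocks b4 y1 z1 :=
      (auto1 b4 (dne dAB hx1A hb4B).symm hb47 (dne dBC hb4B hz1C)).p312
    have f5 : NB blocks b5 y1 z1 :=
      (auto1 b5 (dne dAB hx1A hb5B).symm hb57 (dne dBC hb5B hz1C)).p312
    have f6 : NB blocks y2 y1 z1 :=
      (auto1 y2 (dne dAB hx1A hy2B).symm hyy.symm (dne dBC hy2B hz1C)).p312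
    have f13 : NB blocks z1 z2 y1 :=
      (auto1 z2 (dne dAC hx1A hz2C).symm (dne dBC hy1B hz2C).symm hzz.symm).p231
    have f15 : NB blocks z1 c3 y1 :=
      (auto1 c3 (dne dAC hx1A hc3C).symm (dne dBC hy1B hc3C).symm hc31).p231
    have f18 : NB blocks z1 c4 y1 :=
      (auto1 c4 (dne dAC hx1A hc4C).symm (dne dBC hy1B hc4C).symm hc41).p231
    have f7 : NB blocks b5 y2 z2 :=
      (auto2 b5 (dne dAB hx2A hb5B).symm hb56 (dne dBC hb5B hz2C)).p312
    have f9 : NB blocks y2 y1 z2 :=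
      (auto2 y1 (dne dAB hx2A hy1B).symm hyy (dne dBC hy1B hz2C)).p132
    have f12 : NB blocks z1 z2 y2 :=
      (auto2 z1 (dne dAC hx2A hz1C).symm (dne dBC hy2B hz1C).symm hzz).p321
    have f16 : NB blocks z2 c3 y2 :=
      (auto2 c3 (dne dAC hx2A hc3C).symm (dne dBC hy2B hc3C).symm hc32).p231
    exact ⟨b4, b5, y2, y1, z1, z2, c3, c4, hb4B, hb5B, hy2B, hy1B, hz1C, hz2C, hc3C, hc4C,
      hb45, hb46, hb47, hb56, hb57, hyy.symm,
      hzz, (Ne.symm hc31), (Ne.symm hc41), (Ne.symm hc32), (Ne.symm hc42), (Ne.symm hc43),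
      f1, f2, f3, f4, f5, f6, f7, f8, f9, f10, f11, f12, f13, f14, f15, f16, f17, f18, f19, f20⟩
  · -- CASE 2 : star through b0
    have auto : ∀ c ∈ C, ∀ z : α, (z ∈ B ∪ C) → z ≠ b0 → z ≠ c → NB blocks b0 c z := by
      intro c hc z hz hzb hzc
      obtain ⟨a, haA, hbl⟩ := hstar c hc
      refine nb_of_block hS (hBp hb0B) (hCp hc) (dne dBC hb0B hc) hbl (by simp) (by simp) ?_
      simp only [Finset.mem_insert, Finset.mem_singleton]
      push_neg
      refine ⟨?_, hzb, hzc⟩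
      rcases Finset.mem_union.mp hz with h | h
      · exact (dne dAB haA h).symm
      · exact (dne dAC haA h).symm
    -- pick c1
    obtain ⟨c1, hc1C, -⟩ := pick (show (∅ : Finset α).card < C.card from by simp [hC])
    -- pick c2
    have hcardc1 : (C \ {c1}).card = 5 := by
      rw [Finset.card_sdiff_of_subset (by simp [hc1C]), Finset.card_singleton, hC]
    obtain ⟨c2, hc2S, -⟩ := pick (show (∅ : Finset α).card < (C \ {c1}).card from by
      simp [hcardc1])
    rw [Finset.mem_sdiff, Finset.mem_singleton] at hc2S
    obtain ⟨hc2C, hc21⟩ := hc2S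
    -- pick b6
    have hcardb0 : (B \ {b0}).card = 6 := by
      rw [Finset.card_sdiff_of_subset (by simp [hb0B]), Finset.card_singleton, hB]
    obtain ⟨b6, hb6S, hb6F⟩ := pick
      (show ({th blocks c1 c2} : Finset α).card < (B \ ({b0} : Finset α)).card from
        lt_of_le_of_lt (cle1 _) (by rw [hcardb0]; norm_num))
    rw [Finset.mem_sdiff, Finset.mem_singleton] at hb6S
    obtain ⟨hb6B, hb67⟩ := hb6S
    rw [Finset.mem_singleton] at hb6F
    have f12 : NB blocks c1 c2 b6 :=
      nb_of_ne hS (hCp hc1C) (hCp hc2C) (Ne.symm hc21) (dne dBC hb6B hc1C)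
        (dne dBC hb6B hc2C) hb6F
    -- pick c3
    have hcard12 : (C \ {c1, c2}).card = 4 := by
      rw [Finset.card_sdiff_of_subset (by simp [Finset.insert_subset_iff, hc1C, hc2C]),
        card2 (Ne.symm hc21), hC]
    obtain ⟨c3, hc3S, hc3F⟩ := pick
      (show ({th blocks b6 b0, th blocks b6 c1, th blocks b6 c2} : Finset α).card
        < (C \ ({c1, c2} : Finset α)).card from
        lt_of_le_of_lt (cle3 _ _ _) (by rw [hcard12]; norm_num))
    rw [Finset.mem_sdiff] at hc3S
    obtain ⟨hc3C, hc3ni⟩ := hc3S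
    simp only [Finset.mem_insert, Finset.mem_singleton, not_or] at hc3ni hc3F
    obtain ⟨hc31, hc32⟩ := hc3ni
    obtain ⟨hF1, hF2, hF3⟩ := hc3F
    have f10 : NB blocks b6 b0 c3 :=
      nb_of_ne hS (hBp hb6B) (hBp hb0B) hb67 (dne dBC hb6B hc3C).symm
        (dne dBC hb0B hc3C).symm hF1
    have f14 : NB blocks c1 c3 b6 :=
      (nb_of_ne hS (hBp hb6B) (hCp hc1C) (dne dBC hb6B hc1C) (dne dBC hb6B hc3C).symm hc31
        hF2).p231
    have f16 : NB blocks c2 c3 b6 :=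
      (nb_of_ne hS (hBp hb6B) (hCp hc2C) (dne dBC hb6B hc2C) (dne dBC hb6B hc3C).symm hc32
        hF3).p231
    -- pick b5
    have hcardb60 : (B \ {b6, b0}).card = 5 := by
      rw [Finset.card_sdiff_of_subset (by simp [Finset.insert_subset_iff, hb6B, hb0B]),
        card2 hb67, hB]
    obtain ⟨b5, hb5S, hb5F⟩ := pick
      (show ({th blocks b6 c1, th blocks b6 c2, th blocks c1 c2} : Finset α).card
        < (B \ ({b6, b0} : Finset α)).card from
        lt_of_le_of_lt (cle3 _ _ _) (by rw [hcardb60]; norm_num))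
    rw [Finset.mem_sdiff] at hb5S
    obtain ⟨hb5B, hb5ni⟩ := hb5S
    simp only [Finset.mem_insert, Finset.mem_singleton, not_or] at hb5ni hb5F
    obtain ⟨hb56, hb57⟩ := hb5ni
    obtain ⟨hG1, hG2, hG3⟩ := hb5F
    have f4 : NB blocks b5 b6 c1 :=
      (nb_of_ne hS (hBp hb6B) (hCp hc1C) (dne dBC hb6B hc1C) hb56 (dne dBC hb5B hc1C)
        hG1).p312
    have f7 : NB blocks b5 b6 c2 :=
      (nb_of_ne hS (hBp hb6B) (hCp hc2C) (dne dBC hb6B hc2C) hb56 (dne dBC hb5B hc2C)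
        hG2).p312
    have f11 : NB blocks c1 c2 b5 :=
      nb_of_ne hS (hCp hc1C) (hCp hc2C) (Ne.symm hc21) (dne dBC hb5B hc1C)
        (dne dBC hb5B hc2C) hG3
    -- pick c4
    have hcard123 : (C \ {c1, c2, c3}).card = 3 := by
      rw [Finset.card_sdiff_of_subset (by simp [Finset.insert_subset_iff, hc1C, hc2C, hc3C]),
        card3 (Ne.symm hc21) (Ne.symm hc31) (Ne.symm hc32), hC]
    obtain ⟨c4, hc4S, -⟩ := pick (show (∅ : Finset α).card < (C \ ({c1, c2, c3} : Finset α)).card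
      from by simp [hcard123])
    rw [Finset.mem_sdiff] at hc4S
    obtain ⟨hc4C, hc4ni⟩ := hc4S
    simp only [Finset.mem_insert, Finset.mem_singleton, not_or] at hc4ni
    obtain ⟨hc41, hc42, hc43⟩ := hc4ni
    -- pick b4
    have hcardb560 : (B \ {b5, b6, b0}).card = 4 := by
      rw [Finset.card_sdiff_of_subset (by simp [Finset.insert_subset_iff, hb5B, hb6B, hb0B]),
        card3 hb56 hb57 hb67, hB]
    obtain ⟨b4, hb4S, hb4F⟩ := pick
      (show ({th blocks b5 c1, th blocks b6 c1} : Finset α).card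
        < (B \ ({b5, b6, b0} : Finset α)).card from
        lt_of_le_of_lt (cle2 _ _) (by rw [hcardb560]; norm_num))
    rw [Finset.mem_sdiff] at hb4S
    obtain ⟨hb4B, hb4ni⟩ := hb4S
    simp only [Finset.mem_insert, Finset.mem_singleton, not_or] at hb4ni hb4F
    obtain ⟨hb45, hb46, hb47⟩ := hb4ni
    obtain ⟨hI1, hI2⟩ := hb4F
    have f1 : NB blocks b4 b5 c1 :=
      (nb_of_ne hS (hBp hb5B) (hCp hc1C) (dne dBC hb5B hc1C) hb45 (dne dBC hb4B hc1C)
        hI1).p312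
    have f2 : NB blocks b4 b6 c1 :=
      (nb_of_ne hS (hBp hb6B) (hCp hc1C) (dne dBC hb6B hc1C) hb46 (dne dBC hb4B hc1C)
        hI2).p312
    -- auto facts via star
    have f3 : NB blocks b4 b0 c1 :=
      (auto c1 hc1C b4 (Finset.mem_union_left _ hb4B) hb47 (dne dBC hb4B hc1C)).p312
    have f5 : NB blocks b5 b0 c1 :=
      (auto c1 hc1C b5 (Finset.mem_union_left _ hb5B) hb57 (dne dBC hb5B hc1C)).p312
    have f6 : NB blocks b6 b0 c1 :=
      (auto c1 hc1C b6 (Finset.mem_union_left _ hb6B) hb67 (dne dBC hb6B hc1C)).p312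
    have f8 : NB blocks b5 b0 c2 :=
      (auto c2 hc2C b5 (Finset.mem_union_left _ hb5B) hb57 (dne dBC hb5B hc2C)).p312
    have f9 : NB blocks b6 b0 c2 :=
      (auto c2 hc2C b6 (Finset.mem_union_left _ hb6B) hb67 (dne dBC hb6B hc2C)).p312
    have f13 : NB blocks c1 c2 b0 :=
      (auto c1 hc1C c2 (Finset.mem_union_right _ hc2C) (dne dBC hb0B hc2C).symm hc21).p231
    have f15 : NB blocks c1 c3 b0 :=
      (auto c1 hc1C c3 (Finset.mem_union_right _ hc3C) (dne dBC hb0B hc3C).symm hc31).p231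
    have f17 : NB blocks c2 c3 b0 :=
      (auto c2 hc2C c3 (Finset.mem_union_right _ hc3C) (dne dBC hb0B hc3C).symm hc32).p231
    have f18 : NB blocks c1 c4 b0 :=
      (auto c1 hc1C c4 (Finset.mem_union_right _ hc4C) (dne dBC hb0B hc4C).symm hc41).p231
    have f19 : NB blocks c2 c4 b0 :=
      (auto c2 hc2C c4 (Finset.mem_union_right _ hc4C) (dne dBC hb0B hc4C).symm hc42).p231
    have f20 : NB blocks c3 c4 b0 :=
      (auto c3 hc3C c4 (Finset.mem_union_right _ hc4C) (dne dBC hb0B hc4C).symm hc43).p231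
    exact ⟨b4, b5, b6, b0, c1, c2, c3, c4, hb4B, hb5B, hb6B, hb0B, hc1C, hc2C, hc3C, hc4C,
      hb45, hb46, hb47, hb56, hb57, hb67,
      Ne.symm hc21, (Ne.symm hc31), (Ne.symm hc41), (Ne.symm hc32), (Ne.symm hc42), (Ne.symm hc43),
      f1, f2, f3, f4, f5, f6, f7, f8, f9, f10, f11, f12, f13, f14, f15, f16, f17, f18, f19, f20⟩
  · -- CASE 3 : star through c0
    have auto : ∀ b ∈ G, ∀ z : α, (z ∈ B ∪ C) → z ≠ b → z ≠ c0 → NB blocks b c0 z := by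
      intro b hb z hz hzb hzc
      obtain ⟨a, haA, hbl⟩ := hstar b hb
      refine nb_of_block hS (hBp (hGB hb)) (hCp hc0C) (dne dBC (hGB hb) hc0C) hbl
        (by simp) (by simp) ?_
      simp only [Finset.mem_insert, Finset.mem_singleton]
      push_neg
      refine ⟨?_, hzb, hzc⟩
      rcases Finset.mem_union.mp hz with h | h
      · exact (dne dAB haA h).symm
      · exact (dne dAC haA h).symm
    -- pick b7 ∈ G
    obtain ⟨b7, hb7G, -⟩ := pick (show (∅ : Finset α).card < G.card from by simp [hG6])
    have hb7B : b7 ∈ B := hGB hb7G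
    -- pick c2
    have hcardc0 : (C \ {c0}).card = 5 := by
      rw [Finset.card_sdiff_of_subset (by simp [hc0C]), Finset.card_singleton, hC]
    obtain ⟨c2, hc2S, -⟩ := pick (show (∅ : Finset α).card < (C \ {c0}).card from by
      simp [hcardc0])
    rw [Finset.mem_sdiff, Finset.mem_singleton] at hc2S
    obtain ⟨hc2C, hc21⟩ := hc2S
    -- pick b6 ∈ G \ {b7}
    have hcardG7 : (G \ {b7}).card = 5 := by
      rw [Finset.card_sdiff_of_subset (by simp [hb7G]), Finset.card_singleton, hG6]
    obtain ⟨b6, hb6S, hb6F⟩ := pick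
      (show ({th blocks b7 c2, th blocks c0 c2} : Finset α).card
        < (G \ ({b7} : Finset α)).card from
        lt_of_le_of_lt (cle2 _ _) (by rw [hcardG7]; norm_num))
    rw [Finset.mem_sdiff, Finset.mem_singleton] at hb6S
    obtain ⟨hb6G, hb67⟩ := hb6S
    have hb6B : b6 ∈ B := hGB hb6G
    simp only [Finset.mem_insert, Finset.mem_singleton, not_or] at hb6F
    obtain ⟨hF1, hF2⟩ := hb6F
    have f9 : NB blocks b6 b7 c2 :=
      (nb_of_ne hS (hBp hb7B) (hCp hc2C) (dne dBC hb7B hc2C) hb67 (dne dBC hb6B hc2C)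
        hF1).p312
    have f12 : NB blocks c0 c2 b6 :=
      nb_of_ne hS (hCp hc0C) (hCp hc2C) (Ne.symm hc21) (dne dBC hb6B hc0C)
        (dne dBC hb6B hc2C) hF2
    -- pick c3
    have hcard02 : (C \ {c0, c2}).card = 4 := by
      rw [Finset.card_sdiff_of_subset (by simp [Finset.insert_subset_iff, hc0C, hc2C]),
        card2 (Ne.symm hc21), hC]
    obtain ⟨c3, hc3S, hc3F⟩ := pick
      (show ({th blocks b6 b7, th blocks b6 c2, th blocks b7 c2} : Finset α).card
        < (C \ ({c0, c2} : Finset α)).card from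
        lt_of_le_of_lt (cle3 _ _ _) (by rw [hcard02]; norm_num))
    rw [Finset.mem_sdiff] at hc3S
    obtain ⟨hc3C, hc3ni⟩ := hc3S
    simp only [Finset.mem_insert, Finset.mem_singleton, not_or] at hc3ni hc3F
    obtain ⟨hc31, hc32⟩ := hc3ni
    obtain ⟨hH1, hH2, hH3⟩ := hc3F
    have f10 : NB blocks b6 b7 c3 :=
      nb_of_ne hS (hBp hb6B) (hBp hb7B) (by exact fun h => hb67 h) (dne dBC hb6B hc3C).symm
        (dne dBC hb7B hc3C).symm hH1
    have f16 : NB blocks c2 c3 b6 :=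
      (nb_of_ne hS (hBp hb6B) (hCp hc2C) (dne dBC hb6B hc2C) (dne dBC hb6B hc3C).symm hc32
        hH2).p231
    have f17 : NB blocks c2 c3 b7 :=
      (nb_of_ne hS (hBp hb7B) (hCp hc2C) (dne dBC hb7B hc2C) (dne dBC hb7B hc3C).symm hc32
        hH3).p231
    -- pick b5
    have hcardb67 : (B \ {b6, b7}).card = 5 := by
      rw [Finset.card_sdiff_of_subset (by simp [Finset.insert_subset_iff, hb6B, hb7B]),
        card2 hb67, hB]
    obtain ⟨b5, hb5S, hb5F⟩ := pick
      (show ({th blocks b6 c2, th blocks b7 c2, th blocks c0 c2} : Finset α).card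
        < (B \ ({b6, b7} : Finset α)).card from
        lt_of_le_of_lt (cle3 _ _ _) (by rw [hcardb67]; norm_num))
    rw [Finset.mem_sdiff] at hb5S
    obtain ⟨hb5B, hb5ni⟩ := hb5S
    simp only [Finset.mem_insert, Finset.mem_singleton, not_or] at hb5ni hb5F
    obtain ⟨hb56, hb57⟩ := hb5ni
    obtain ⟨hG1, hG2, hG3⟩ := hb5F
    have f7 : NB blocks b5 b6 c2 :=
      (nb_of_ne hS (hBp hb6B) (hCp hc2C) (dne dBC hb6B hc2C) hb56 (dne dBC hb5B hc2C)
        hG1).p312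
    have f8 : NB blocks b5 b7 c2 :=
      (nb_of_ne hS (hBp hb7B) (hCp hc2C) (dne dBC hb7B hc2C) hb57 (dne dBC hb5B hc2C)
        hG2).p312
    have f11 : NB blocks c0 c2 b5 :=
      nb_of_ne hS (hCp hc0C) (hCp hc2C) (Ne.symm hc21) (dne dBC hb5B hc0C)
        (dne dBC hb5B hc2C) hG3
    -- pick c4
    have hcard023 : (C \ {c0, c2, c3}).card = 3 := by
      rw [Finset.card_sdiff_of_subset (by simp [Finset.insert_subset_iff, hc0C, hc2C, hc3C]),
        card3 (Ne.symm hc21) (Ne.symm hc31) (Ne.symm hc32), hC]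
    obtain ⟨c4, hc4S, hc4F⟩ := pick
      (show ({th blocks b7 c2, th blocks b7 c3} : Finset α).card
        < (C \ ({c0, c2, c3} : Finset α)).card from
        lt_of_le_of_lt (cle2 _ _) (by rw [hcard023]; norm_num))
    rw [Finset.mem_sdiff] at hc4S
    obtain ⟨hc4C, hc4ni⟩ := hc4S
    simp only [Finset.mem_insert, Finset.mem_singleton, not_or] at hc4ni hc4F
    obtain ⟨hc41, hc42, hc43⟩ := hc4ni
    obtain ⟨hJ1, hJ2⟩ := hc4F
    have f19 : NB blocks c2 c4 b7 :=
      (nb_of_ne hS (hBp hb7B) (hCp hc2C) (dne dBC hb7B hc2C) (dne dBC hb7B hc4C).symm hc42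
        hJ1).p231
    have f20 : NB blocks c3 c4 b7 :=
      (nb_of_ne hS (hBp hb7B) (hCp hc3C) (dne dBC hb7B hc3C) (dne dBC hb7B hc4C).symm hc43
        hJ2).p231
    -- pick b4
    have hcardb567 : (B \ {b5, b6, b7}).card = 4 := by
      rw [Finset.card_sdiff_of_subset (by simp [Finset.insert_subset_iff, hb5B, hb6B, hb7B]),
        card3 hb56 hb57 hb67, hB]
    obtain ⟨b4, hb4S, hb4F⟩ := pick
      (show ({th blocks b5 c0} : Finset α).card < (B \ ({b5, b6, b7} : Finset α)).card from
        lt_of_le_of_lt (cle1 _) (by rw [hcardb567]; norm_num))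
    rw [Finset.mem_sdiff] at hb4S
    obtain ⟨hb4B, hb4ni⟩ := hb4S
    simp only [Finset.mem_insert, Finset.mem_singleton, not_or] at hb4ni
    obtain ⟨hb45, hb46, hb47⟩ := hb4ni
    rw [Finset.mem_singleton] at hb4F
    have f1 : NB blocks b4 b5 c0 :=
      (nb_of_ne hS (hBp hb5B) (hCp hc0C) (dne dBC hb5B hc0C) hb45 (dne dBC hb4B hc0C)
        hb4F).p312
    -- auto facts via star
    have f2 : NB blocks b4 b6 c0 :=
      (auto b6 hb6G b4 (Finset.mem_union_left _ hb4B) hb46 (dne dBC hb4B hc0C)).p312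
    have f3 : NB blocks b4 b7 c0 :=
      (auto b7 hb7G b4 (Finset.mem_union_left _ hb4B) hb47 (dne dBC hb4B hc0C)).p312
    have f4 : NB blocks b5 b6 c0 :=
      (auto b6 hb6G b5 (Finset.mem_union_left _ hb5B) hb56 (dne dBC hb5B hc0C)).p312
    have f5 : NB blocks b5 b7 c0 :=
      (auto b7 hb7G b5 (Finset.mem_union_left _ hb5B) hb57 (dne dBC hb5B hc0C)).p312
    have f6 : NB blocks b6 b7 c0 :=
      (auto b7 hb7G b6 (Finset.mem_union_left _ hb6B) hb67 (dne dBC hb6B hc0C)).p312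
    have f13 : NB blocks c0 c2 b7 :=
      (auto b7 hb7G c2 (Finset.mem_union_right _ hc2C) (dne dBC hb7B hc2C).symm hc21).p231
    have f14 : NB blocks c0 c3 b6 :=
      (auto b6 hb6G c3 (Finset.mem_union_right _ hc3C) (dne dBC hb6B hc3C).symm hc31).p231
    have f15 : NB blocks c0 c3 b7 :=
      (auto b7 hb7G c3 (Finset.mem_union_right _ hc3C) (dne dBC hb7B hc3C).symm hc31).p231
    have f18 : NB blocks c0 c4 b7 :=
      (auto b7 hb7G c4 (Finset.mem_union_right _ hc4C) (dne dBC hb7B hc4C).symm hc41).p231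
    exact ⟨b4, b5, b6, b7, c0, c2, c3, c4, hb4B, hb5B, hb6B, hb7B, hc0C, hc2C, hc3C, hc4C,
      hb45, hb46, hb47, hb56, hb57, hb67,
      Ne.symm hc21, (Ne.symm hc31), (Ne.symm hc41), (Ne.symm hc32), (Ne.symm hc42), (Ne.symm hc43),
      f1, f2, f3, f4, f5, f6, f7, f8, f9, f10, f11, f12, f13, f14, f15, f16, f17, f18, f19, f20⟩

lemma assemble {points : Finset α} {blocks : Finset (Finset α)} (hS : IsSTS points blocks)
    {A B C : Finset α}
    (hABC : A ∪ B ∪ C = points)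
    (dAB : Disjoint A B) (dAC : Disjoint A C) (dBC : Disjoint B C)
    (iA : IsIndep blocks A) (iB : IsIndep blocks B) (iC : IsIndep blocks C)
    {a1 a2 a3 a4 a5 a6 a7 a8 b1 b2 b3 b4 b5 b6 b7 c1 c2 c3 c4 c5 c6 : α}
    (hla : ([a1, a2, a3, a4, a5, a6, a7, a8] : List α).Nodup)
    (hlb : ([b1, b2, b3, b4, b5, b6, b7] : List α).Nodup)
    (hlc : ([c1, c2, c3, c4, c5, c6] : List α).Nodup)
    (hAeq : ([a1, a2, a3, a4, a5, a6, a7, a8] : List α).toFinset = A)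
    (hBeq : ([b1, b2, b3, b4, b5, b6, b7] : List α).toFinset = B)
    (hCeq : ([c1, c2, c3, c4, c5, c6] : List α).toFinset = C)
    (g1 : NB blocks a5 a6 b1) (g2 : NB blocks a5 a7 b1) (g3 : NB blocks a5 a8 b1)
    (g4 : NB blocks a6 a7 b1) (g5 : NB blocks a6 a8 b1) (g6 : NB blocks a7 a8 b1)
    (g7 : NB blocks a6 a7 b2) (g8 : NB blocks a6 a8 b2) (g9 : NB blocks a7 a8 b2)
    (g10 : NB blocks a7 a8 b3)
    (g11 : NB blocks b1 b2 a6) (g12 : NB blocks b1 b2 a7) (g13 : NB blocks b1 b2 a8)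
    (g14 : NB blocks b1 b3 a7) (g15 : NB blocks b1 b3 a8)
    (g16 : NB blocks b2 b3 a7) (g17 : NB blocks b2 b3 a8)
    (g18 : NB blocks b1 b4 a8) (g19 : NB blocks b2 b4 a8) (g20 : NB blocks b3 b4 a8)
    (f1 : NB blocks b4 b5 c1) (f2 : NB blocks b4 b6 c1) (f3 : NB blocks b4 b7 c1)
    (f4 : NB blocks b5 b6 c1) (f5 : NB blocks b5 b7 c1) (f6 : NB blocks b6 b7 c1)
    (f7 : NB blocks b5 b6 c2) (f8 : NB blocks b5 b7 c2) (f9 : NB blocks b6 b7 c2)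
    (f10 : NB blocks b6 b7 c3)
    (f11 : NB blocks c1 c2 b5) (f12 : NB blocks c1 c2 b6) (f13 : NB blocks c1 c2 b7)
    (f14 : NB blocks c1 c3 b6) (f15 : NB blocks c1 c3 b7) (f16 : NB blocks c2 c3 b6)
    (f17 : NB blocks c2 c3 b7)
    (f18 : NB blocks c1 c4 b7) (f19 : NB blocks c2 c4 b7) (f20 : NB blocks c3 c4 b7) :
    IsGoodSeq points blocks 5 ([a1, a2, a3, a4, a5, a6, a7, a8] ++ [b1, b2, b3, b4, b5, b6, b7] ++ [c1, c2, c3, c4, c5, c6]) := by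
  have hmemA : ∀ x ∈ ([a1, a2, a3, a4, a5, a6, a7, a8] : List α), x ∈ A := by
    intro x hx; rw [← hAeq]; exact List.mem_toFinset.mpr hx
  have hmemB : ∀ x ∈ ([b1, b2, b3, b4, b5, b6, b7] : List α), x ∈ B := by
    intro x hx; rw [← hBeq]; exact List.mem_toFinset.mpr hx
  have hmemC : ∀ x ∈ ([c1, c2, c3, c4, c5, c6] : List α), x ∈ C := by
    intro x hx; rw [← hCeq]; exact List.mem_toFinset.mpr hx
  have ha1 : a1 ∈ A := hmemA a1 (by simp)
  have ha2 : a2 ∈ A := hmemA a2 (by simp)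
  have ha3 : a3 ∈ A := hmemA a3 (by simp)
  have ha4 : a4 ∈ A := hmemA a4 (by simp)
  have ha5 : a5 ∈ A := hmemA a5 (by simp)
  have ha6 : a6 ∈ A := hmemA a6 (by simp)
  have ha7 : a7 ∈ A := hmemA a7 (by simp)
  have ha8 : a8 ∈ A := hmemA a8 (by simp)
  have hb1 : b1 ∈ B := hmemB b1 (by simp)
  have hb2 : b2 ∈ B := hmemB b2 (by simp)
  have hb3 : b3 ∈ B := hmemB b3 (by simp)
  have hb4 : b4 ∈ B := hmemB b4 (by simp)
  have hb5 : b5 ∈ B := hmemB b5 (by simp)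
  have hb6 : b6 ∈ B := hmemB b6 (by simp)
  have hb7 : b7 ∈ B := hmemB b7 (by simp)
  have hc1 : c1 ∈ C := hmemC c1 (by simp)
  have hc2 : c2 ∈ C := hmemC c2 (by simp)
  have hc3 : c3 ∈ C := hmemC c3 (by simp)
  have hc4 : c4 ∈ C := hmemC c4 (by simp)
  have hc5 : c5 ∈ C := hmemC c5 (by simp)
  have hc6 : c6 ∈ C := hmemC c6 (by simp)
  have hcard3 : ∀ b ∈ blocks, b.card = 3 := fun b hb => (hS.1 b hb).2
  refine ⟨?_, ?_, ?_⟩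
  · -- Nodup
    refine ((hla.append hlb ?_).append hlc ?_)
    · intro x hx1 hx2
      exact dne dAB (hmemA x hx1) (hmemB x hx2) rfl
    · intro x hx1 hx2
      rcases List.mem_append.mp hx1 with h | h
      · exact dne dAC (hmemA x h) (hmemC x hx2) rfl
      · exact dne dBC (hmemB x h) (hmemC x hx2) rfl
  · -- toFinset
    rw [List.toFinset_append, List.toFinset_append, hAeq, hBeq, hCeq]
    exact hABC
  · -- windows
    intro i b hb
    by_cases hile : i ≤ 20
    · interval_cases i
      · -- window 0 : pure A
        rw [show ((([a1, a2, a3, a4, a5, a6, a7, a8] ++ [b1, b2, b3, b4, b5, b6, b7] ++ [c1, c2, c3, c4, c5, c6] : List α).drop 0).take 5) = ([a1, a2, a3, a4, a5] : List α) from rfl]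
        intro hsub
        refine iA b hb (hsub.trans ?_)
        intro x hx
        simp only [List.toFinset_cons, List.toFinset_nil, insert_empty_eq,
          Finset.mem_insert, Finset.mem_singleton] at hx
        rcases hx with rfl|rfl|rfl|rfl|rfl <;> assumption
      · -- window 1 : pure A
        rw [show ((([a1, a2, a3, a4, a5, a6, a7, a8] ++ [b1, b2, b3, b4, b5, b6, b7] ++ [c1, c2, c3, c4, c5, c6] : List α).drop 1).take 5) = ([a2, a3, a4, a5, a6] : List α) from rfl]
        intro hsub
        refine iA b hb (hsub.trans ?_)
        intro x hx
        simp only [List.toFinset_cons, List.toFinset_nil, insert_empty_eq,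
          Finset.mem_insert, Finset.mem_singleton] at hx
        rcases hx with rfl|rfl|rfl|rfl|rfl <;> assumption
      · -- window 2 : pure A
        rw [show ((([a1, a2, a3, a4, a5, a6, a7, a8] ++ [b1, b2, b3, b4, b5, b6, b7] ++ [c1, c2, c3, c4, c5, c6] : List α).drop 2).take 5) = ([a3, a4, a5, a6, a7] : List α) from rfl]
        intro hsub
        refine iA b hb (hsub.trans ?_)
        intro x hx
        simp only [List.toFinset_cons, List.toFinset_nil, insert_empty_eq,
          Finset.mem_insert, Finset.mem_singleton] at hx
        rcases hx with rfl|rfl|rfl|rfl|rfl <;> assumption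
      · -- window 3 : pure A
        rw [show ((([a1, a2, a3, a4, a5, a6, a7, a8] ++ [b1, b2, b3, b4, b5, b6, b7] ++ [c1, c2, c3, c4, c5, c6] : List α).drop 3).take 5) = ([a4, a5, a6, a7, a8] : List α) from rfl]
        intro hsub
        refine iA b hb (hsub.trans ?_)
        intro x hx
        simp only [List.toFinset_cons, List.toFinset_nil, insert_empty_eq,
          Finset.mem_insert, Finset.mem_singleton] at hx
        rcases hx with rfl|rfl|rfl|rfl|rfl <;> assumption
      · -- window 4 : mixed
        rw [show ((([a1, a2, a3, a4, a5, a6, a7, a8] ++ [b1, b2, b3, b4, b5, b6, b7] ++ [c1, c2, c3, c4, c5, c6] : List α).drop 4).take 5) = ([a5, a6, a7, a8, b1] : List α) from rfl]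
        refine key hcard3 iA iB (P := {a5, a6, a7, a8}) (Q := {b1})
          (by simp [Finset.insert_subset_iff, ha5, ha6, ha7, ha8])
          (by simp [Finset.insert_subset_iff, hb1])
          (by intro x hx; simp only [List.toFinset_cons, List.toFinset_nil,
                insert_empty_eq, Finset.mem_insert, Finset.mem_singleton] at hx
              simp only [Finset.mem_union, Finset.mem_insert, Finset.mem_singleton]
              tauto)
          ?_ ?_ b hb
        · intro x hx y hy hxy z hz
          simp only [Finset.mem_insert, Finset.mem_singleton] at hx hy hz
          rcases hz with rfl <;> rcases hx with rfl|rfl|rfl|rfl <;> rcases hy with rfl|rfl|rfl|rfl <;>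
            first
              | exact absurd rfl hxy
              | assumption
              | exact NB.p213 (by assumption)
        · intro x hx y hy hxy z hz
          simp only [Finset.mem_singleton] at hx hy
          exact absurd (hx.trans hy.symm) hxy
      · -- window 5 : mixed
        rw [show ((([a1, a2, a3, a4, a5, a6, a7, a8] ++ [b1, b2, b3, b4, b5, b6, b7] ++ [c1, c2, c3, c4, c5, c6] : List α).drop 5).take 5) = ([a6, a7, a8, b1, b2] : List α) from rfl]
        refine key hcard3 iA iB (P := {a6, a7, a8}) (Q := {b1, b2})
          (by simp [Finset.insert_subset_iff, ha6, ha7, ha8])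
          (by simp [Finset.insert_subset_iff, hb1, hb2])
          (by intro x hx; simp only [List.toFinset_cons, List.toFinset_nil,
                insert_empty_eq, Finset.mem_insert, Finset.mem_singleton] at hx
              simp only [Finset.mem_union, Finset.mem_insert, Finset.mem_singleton]
              tauto)
          ?_ ?_ b hb
        · intro x hx y hy hxy z hz
          simp only [Finset.mem_insert, Finset.mem_singleton] at hx hy hz
          rcases hz with rfl|rfl <;> rcases hx with rfl|rfl|rfl <;> rcases hy with rfl|rfl|rfl <;>
            first
              | exact absurd rfl hxy
              | assumption
              | exact NB.p213 (by assumption)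
        · intro x hx y hy hxy z hz
          simp only [Finset.mem_insert, Finset.mem_singleton] at hx hy hz
          rcases hz with rfl|rfl|rfl <;> rcases hx with rfl|rfl <;> rcases hy with rfl|rfl <;>
            first
              | exact absurd rfl hxy
              | assumption
              | exact NB.p213 (by assumption)
      · -- window 6 : mixed
        rw [show ((([a1, a2, a3, a4, a5, a6, a7, a8] ++ [b1, b2, b3, b4, b5, b6, b7] ++ [c1, c2, c3, c4, c5, c6] : List α).drop 6).take 5) = ([a7, a8, b1, b2, b3] : List α) from rfl]
        refine key hcard3 iA iB (P := {a7, a8}) (Q := {b1, b2, b3})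
          (by simp [Finset.insert_subset_iff, ha7, ha8])
          (by simp [Finset.insert_subset_iff, hb1, hb2, hb3])
          (by intro x hx; simp only [List.toFinset_cons, List.toFinset_nil,
                insert_empty_eq, Finset.mem_insert, Finset.mem_singleton] at hx
              simp only [Finset.mem_union, Finset.mem_insert, Finset.mem_singleton]
              tauto)
          ?_ ?_ b hb
        · intro x hx y hy hxy z hz
          simp only [Finset.mem_insert, Finset.mem_singleton] at hx hy hz
          rcases hz with rfl|rfl|rfl <;> rcases hx with rfl|rfl <;> rcases hy with rfl|rfl <;>
            first
              | exact absurd rfl hxy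
              | assumption
              | exact NB.p213 (by assumption)
        · intro x hx y hy hxy z hz
          simp only [Finset.mem_insert, Finset.mem_singleton] at hx hy hz
          rcases hz with rfl|rfl <;> rcases hx with rfl|rfl|rfl <;> rcases hy with rfl|rfl|rfl <;>
            first
              | exact absurd rfl hxy
              | assumption
              | exact NB.p213 (by assumption)
      · -- window 7 : mixed
        rw [show ((([a1, a2, a3, a4, a5, a6, a7, a8] ++ [b1, b2, b3, b4, b5, b6, b7] ++ [c1, c2, c3, c4, c5, c6] : List α).drop 7).take 5) = ([a8, b1, b2, b3, b4] : List α) from rfl]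
        refine key hcard3 iA iB (P := {a8}) (Q := {b1, b2, b3, b4})
          (by simp [Finset.insert_subset_iff, ha8])
          (by simp [Finset.insert_subset_iff, hb1, hb2, hb3, hb4])
          (by intro x hx; simp only [List.toFinset_cons, List.toFinset_nil,
                insert_empty_eq, Finset.mem_insert, Finset.mem_singleton] at hx
              simp only [Finset.mem_union, Finset.mem_insert, Finset.mem_singleton]
              tauto)
          ?_ ?_ b hb
        · intro x hx y hy hxy z hz
          simp only [Finset.mem_singleton] at hx hy
          exact absurd (hx.trans hy.symm) hxy
        · intro x hx y hy hxy z hz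
          simp only [Finset.mem_insert, Finset.mem_singleton] at hx hy hz
          rcases hz with rfl <;> rcases hx with rfl|rfl|rfl|rfl <;> rcases hy with rfl|rfl|rfl|rfl <;>
            first
              | exact absurd rfl hxy
              | assumption
              | exact NB.p213 (by assumption)
      · -- window 8 : pure B
        rw [show ((([a1, a2, a3, a4, a5, a6, a7, a8] ++ [b1, b2, b3, b4, b5, b6, b7] ++ [c1, c2, c3, c4, c5, c6] : List α).drop 8).take 5) = ([b1, b2, b3, b4, b5] : List α) from rfl]
        intro hsub
        refine iB b hb (hsub.trans ?_)
        intro x hx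
        simp only [List.toFinset_cons, List.toFinset_nil, insert_empty_eq,
          Finset.mem_insert, Finset.mem_singleton] at hx
        rcases hx with rfl|rfl|rfl|rfl|rfl <;> assumption
      · -- window 9 : pure B
        rw [show ((([a1, a2, a3, a4, a5, a6, a7, a8] ++ [b1, b2, b3, b4, b5, b6, b7] ++ [c1, c2, c3, c4, c5, c6] : List α).drop 9).take 5) = ([b2, b3, b4, b5, b6] : List α) from rfl]
        intro hsub
        refine iB b hb (hsub.trans ?_)
        intro x hx
        simp only [List.toFinset_cons, List.toFinset_nil, insert_empty_eq,
          Finset.mem_insert, Finset.mem_singleton] at hx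
        rcases hx with rfl|rfl|rfl|rfl|rfl <;> assumption
      · -- window 10 : pure B
        rw [show ((([a1, a2, a3, a4, a5, a6, a7, a8] ++ [b1, b2, b3, b4, b5, b6, b7] ++ [c1, c2, c3, c4, c5, c6] : List α).drop 10).take 5) = ([b3, b4, b5, b6, b7] : List α) from rfl]
        intro hsub
        refine iB b hb (hsub.trans ?_)
        intro x hx
        simp only [List.toFinset_cons, List.toFinset_nil, insert_empty_eq,
          Finset.mem_insert, Finset.mem_singleton] at hx
        rcases hx with rfl|rfl|rfl|rfl|rfl <;> assumption
      · -- window 11 : mixed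
        rw [show ((([a1, a2, a3, a4, a5, a6, a7, a8] ++ [b1, b2, b3, b4, b5, b6, b7] ++ [c1, c2, c3, c4, c5, c6] : List α).drop 11).take 5) = ([b4, b5, b6, b7, c1] : List α) from rfl]
        refine key hcard3 iB iC (P := {b4, b5, b6, b7}) (Q := {c1})
          (by simp [Finset.insert_subset_iff, hb4, hb5, hb6, hb7])
          (by simp [Finset.insert_subset_iff, hc1])
          (by intro x hx; simp only [List.toFinset_cons, List.toFinset_nil,
                insert_empty_eq, Finset.mem_insert, Finset.mem_singleton] at hx
              simp only [Finset.mem_union, Finset.mem_insert, Finset.mem_singleton]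
              tauto)
          ?_ ?_ b hb
        · intro x hx y hy hxy z hz
          simp only [Finset.mem_insert, Finset.mem_singleton] at hx hy hz
          rcases hz with rfl <;> rcases hx with rfl|rfl|rfl|rfl <;> rcases hy with rfl|rfl|rfl|rfl <;>
            first
              | exact absurd rfl hxy
              | assumption
              | exact NB.p213 (by assumption)
        · intro x hx y hy hxy z hz
          simp only [Finset.mem_singleton] at hx hy
          exact absurd (hx.trans hy.symm) hxy
      · -- window 12 : mixed
        rw [show ((([a1, a2, a3, a4, a5, a6, a7, a8] ++ [b1, b2, b3, b4, b5, b6, b7] ++ [c1, c2, c3, c4, c5, c6] : List α).drop 12).take 5) = ([b5, b6, b7, c1, c2] : List α) from rfl]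
        refine key hcard3 iB iC (P := {b5, b6, b7}) (Q := {c1, c2})
          (by simp [Finset.insert_subset_iff, hb5, hb6, hb7])
          (by simp [Finset.insert_subset_iff, hc1, hc2])
          (by intro x hx; simp only [List.toFinset_cons, List.toFinset_nil,
                insert_empty_eq, Finset.mem_insert, Finset.mem_singleton] at hx
              simp only [Finset.mem_union, Finset.mem_insert, Finset.mem_singleton]
              tauto)
          ?_ ?_ b hb
        · intro x hx y hy hxy z hz
          simp only [Finset.mem_insert, Finset.mem_singleton] at hx hy hz
          rcases hz with rfl|rfl <;> rcases hx with rfl|rfl|rfl <;> rcases hy with rfl|rfl|rfl <;>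
            first
              | exact absurd rfl hxy
              | assumption
              | exact NB.p213 (by assumption)
        · intro x hx y hy hxy z hz
          simp only [Finset.mem_insert, Finset.mem_singleton] at hx hy hz
          rcases hz with rfl|rfl|rfl <;> rcases hx with rfl|rfl <;> rcases hy with rfl|rfl <;>
            first
              | exact absurd rfl hxy
              | assumption
              | exact NB.p213 (by assumption)
      · -- window 13 : mixed
        rw [show ((([a1, a2, a3, a4, a5, a6, a7, a8] ++ [b1, b2, b3, b4, b5, b6, b7] ++ [c1, c2, c3, c4, c5, c6] : List α).drop 13).take 5) = ([b6, b7, c1, c2, c3] : List α) from rfl]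
        refine key hcard3 iB iC (P := {b6, b7}) (Q := {c1, c2, c3})
          (by simp [Finset.insert_subset_iff, hb6, hb7])
          (by simp [Finset.insert_subset_iff, hc1, hc2, hc3])
          (by intro x hx; simp only [List.toFinset_cons, List.toFinset_nil,
                insert_empty_eq, Finset.mem_insert, Finset.mem_singleton] at hx
              simp only [Finset.mem_union, Finset.mem_insert, Finset.mem_singleton]
              tauto)
          ?_ ?_ b hb
        · intro x hx y hy hxy z hz
          simp only [Finset.mem_insert, Finset.mem_singleton] at hx hy hz
          rcases hz with rfl|rfl|rfl <;> rcases hx with rfl|rfl <;> rcases hy with rfl|rfl <;>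
            first
              | exact absurd rfl hxy
              | assumption
              | exact NB.p213 (by assumption)
        · intro x hx y hy hxy z hz
          simp only [Finset.mem_insert, Finset.mem_singleton] at hx hy hz
          rcases hz with rfl|rfl <;> rcases hx with rfl|rfl|rfl <;> rcases hy with rfl|rfl|rfl <;>
            first
              | exact absurd rfl hxy
              | assumption
              | exact NB.p213 (by assumption)
      · -- window 14 : mixed
        rw [show ((([a1, a2, a3, a4, a5, a6, a7, a8] ++ [b1, b2, b3, b4, b5, b6, b7] ++ [c1, c2, c3, c4, c5, c6] : List α).drop 14).take 5) = ([b7, c1, c2, c3, c4] : List α) from rfl]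
        refine key hcard3 iB iC (P := {b7}) (Q := {c1, c2, c3, c4})
          (by simp [Finset.insert_subset_iff, hb7])
          (by simp [Finset.insert_subset_iff, hc1, hc2, hc3, hc4])
          (by intro x hx; simp only [List.toFinset_cons, List.toFinset_nil,
                insert_empty_eq, Finset.mem_insert, Finset.mem_singleton] at hx
              simp only [Finset.mem_union, Finset.mem_insert, Finset.mem_singleton]
              tauto)
          ?_ ?_ b hb
        · intro x hx y hy hxy z hz
          simp only [Finset.mem_singleton] at hx hy
          exact absurd (hx.trans hy.symm) hxy
        · intro x hx y hy hxy z hz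
          simp only [Finset.mem_insert, Finset.mem_singleton] at hx hy hz
          rcases hz with rfl <;> rcases hx with rfl|rfl|rfl|rfl <;> rcases hy with rfl|rfl|rfl|rfl <;>
            first
              | exact absurd rfl hxy
              | assumption
              | exact NB.p213 (by assumption)
      · -- window 15 : pure C
        rw [show ((([a1, a2, a3, a4, a5, a6, a7, a8] ++ [b1, b2, b3, b4, b5, b6, b7] ++ [c1, c2, c3, c4, c5, c6] : List α).drop 15).take 5) = ([c1, c2, c3, c4, c5] : List α) from rfl]
        intro hsub
        refine iC b hb (hsub.trans ?_)
        intro x hx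
        simp only [List.toFinset_cons, List.toFinset_nil, insert_empty_eq,
          Finset.mem_insert, Finset.mem_singleton] at hx
        rcases hx with rfl|rfl|rfl|rfl|rfl <;> assumption
      · -- window 16 : pure C
        rw [show ((([a1, a2, a3, a4, a5, a6, a7, a8] ++ [b1, b2, b3, b4, b5, b6, b7] ++ [c1, c2, c3, c4, c5, c6] : List α).drop 16).take 5) = ([c2, c3, c4, c5, c6] : List α) from rfl]
        intro hsub
        refine iC b hb (hsub.trans ?_)
        intro x hx
        simp only [List.toFinset_cons, List.toFinset_nil, insert_empty_eq,
          Finset.mem_insert, Finset.mem_singleton] at hx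
        rcases hx with rfl|rfl|rfl|rfl|rfl <;> assumption
      · -- window 17 : pure C
        rw [show ((([a1, a2, a3, a4, a5, a6, a7, a8] ++ [b1, b2, b3, b4, b5, b6, b7] ++ [c1, c2, c3, c4, c5, c6] : List α).drop 17).take 5) = ([c3, c4, c5, c6] : List α) from rfl]
        intro hsub
        refine iC b hb (hsub.trans ?_)
        intro x hx
        simp only [List.toFinset_cons, List.toFinset_nil, insert_empty_eq,
          Finset.mem_insert, Finset.mem_singleton] at hx
        rcases hx with rfl|rfl|rfl|rfl <;> assumption
      · -- window 18 : pure C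
        rw [show ((([a1, a2, a3, a4, a5, a6, a7, a8] ++ [b1, b2, b3, b4, b5, b6, b7] ++ [c1, c2, c3, c4, c5, c6] : List α).drop 18).take 5) = ([c4, c5, c6] : List α) from rfl]
        intro hsub
        refine iC b hb (hsub.trans ?_)
        intro x hx
        simp only [List.toFinset_cons, List.toFinset_nil, insert_empty_eq,
          Finset.mem_insert, Finset.mem_singleton] at hx
        rcases hx with rfl|rfl|rfl <;> assumption
      · -- window 19 : pure C
        rw [show ((([a1, a2, a3, a4, a5, a6, a7, a8] ++ [b1, b2, b3, b4, b5, b6, b7] ++ [c1, c2, c3, c4, c5, c6] : List α).drop 19).take 5) = ([c5, c6] : List α) from rfl]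
        intro hsub
        refine iC b hb (hsub.trans ?_)
        intro x hx
        simp only [List.toFinset_cons, List.toFinset_nil, insert_empty_eq,
          Finset.mem_insert, Finset.mem_singleton] at hx
        rcases hx with rfl|rfl <;> assumption
      · -- window 20 : pure C
        rw [show ((([a1, a2, a3, a4, a5, a6, a7, a8] ++ [b1, b2, b3, b4, b5, b6, b7] ++ [c1, c2, c3, c4, c5, c6] : List α).drop 20).take 5) = ([c6] : List α) from rfl]
        intro hsub
        refine iC b hb (hsub.trans ?_)
        intro x hx
        simp only [List.toFinset_cons, List.toFinset_nil, insert_empty_eq,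
          Finset.mem_insert, Finset.mem_singleton] at hx
        rcases hx with rfl <;> assumption
    · -- i ≥ 21 : empty window
      push_neg at hile
      have hnil : ([a1, a2, a3, a4, a5, a6, a7, a8] ++ [b1, b2, b3, b4, b5, b6, b7] ++ [c1, c2, c3, c4, c5, c6] : List α).drop i = [] := List.drop_eq_nil_of_le (by
        simp only [List.length_append, List.length_cons, List.length_nil]
        omega)
      rw [hnil]
      intro hsub
      have : b = ∅ := Finset.subset_empty.mp (by simpa using hsub)
      have h3 := hcard3 b hb
      rw [this] at h3
      simp at h3

end STS16

theorem stmt16 {α : Type*} [DecidableEq α] (points : Finset α) (blocks : Finset (Finset α))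
    (hS : IsSTS points blocks) (hv : points.card = 21)
    (A B C : Finset α) (hcol : IsColouring3 points blocks A B C)
    (hA : A.card = 8) (hB : B.card = 7) (hC : C.card = 6) :
    ∃ L : List α, IsGoodSeq points blocks 5 L := by
  classical
  obtain ⟨hABC, dAB, dAC, dBC, iA, iB, iC⟩ := hcol
  have hAp : A ⊆ points := hABC ▸ (Finset.subset_union_left.trans Finset.subset_union_left)
  have hBp : B ⊆ points := hABC ▸ (Finset.subset_union_right.trans Finset.subset_union_left)
  have hCp : C ⊆ points := hABC ▸ Finset.subset_union_right
  have htri := STS16.trichotomy hS hv hABC dAB dAC dBC iA iB iC hA hB hC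
  obtain ⟨b4, b5, b6, b7, c1, c2, c3, c4, hb4B, hb5B, hb6B, hb7B, hc1C, hc2C, hc3C, hc4C,
    n45, n46, n47, n56, n57, n67, m12, m13, m14, m23, m24, m34,
    f1, f2, f3, f4, f5, f6, f7, f8, f9, f10, f11, f12, f13, f14, f15, f16, f17, f18, f19,
    f20⟩ := STS16.bcd hS hABC dAB dAC dBC hB hC htri
  -- extract b1 b2 b3
  have hsubB4 : ({b4, b5, b6, b7} : Finset α) ⊆ B := by
    simp [Finset.insert_subset_iff, hb4B, hb5B, hb6B, hb7B]
  have hcardB3 : (B \ {b4, b5, b6, b7}).card = 3 := by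
    rw [Finset.card_sdiff_of_subset hsubB4, STS16.card4 n45 n46 n47 n56 n57 n67, hB]
  obtain ⟨b1, b2, b3, n12, n13, n23, hB3⟩ := Finset.card_eq_three.mp hcardB3
  have hb1S : b1 ∈ B \ ({b4, b5, b6, b7} : Finset α) := by rw [hB3]; simp
  have hb2S : b2 ∈ B \ ({b4, b5, b6, b7} : Finset α) := by rw [hB3]; simp
  have hb3S : b3 ∈ B \ ({b4, b5, b6, b7} : Finset α) := by rw [hB3]; simp
  rw [Finset.mem_sdiff] at hb1S hb2S hb3S
  obtain ⟨hb1B, hb1ni⟩ := hb1S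
  obtain ⟨hb2B, hb2ni⟩ := hb2S
  obtain ⟨hb3B, hb3ni⟩ := hb3S
  simp only [Finset.mem_insert, Finset.mem_singleton, not_or] at hb1ni hb2ni hb3ni
  obtain ⟨n14, n15, n16, n17⟩ := hb1ni
  obtain ⟨n24, n25, n26, n27⟩ := hb2ni
  obtain ⟨n34, n35, n36, n37⟩ := hb3ni
  -- pick a8
  obtain ⟨a8, ha8A, ha8F⟩ := STS16.pick
    (show ({STS16.th blocks b1 b2, STS16.th blocks b1 b3, STS16.th blocks b1 b4,
      STS16.th blocks b2 b3, STS16.th blocks b2 b4, STS16.th blocks b3 b4} : Finset α).card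
      < A.card from lt_of_le_of_lt (STS16.cle6 _ _ _ _ _ _) (by rw [hA]; norm_num))
  simp only [Finset.mem_insert, Finset.mem_singleton, not_or] at ha8F
  obtain ⟨hT1, hT2, hT3, hT4, hT5, hT6⟩ := ha8F
  have g13 : STS16.NB blocks b1 b2 a8 := STS16.nb_of_ne hS (hBp hb1B) (hBp hb2B) n12
    (STS16.dne dAB ha8A hb1B) (STS16.dne dAB ha8A hb2B) hT1
  have g15 : STS16.NB blocks b1 b3 a8 := STS16.nb_of_ne hS (hBp hb1B) (hBp hb3B) n13
    (STS16.dne dAB ha8A hb1B) (STS16.dne dAB ha8A hb3B) hT2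
  have g18 : STS16.NB blocks b1 b4 a8 := STS16.nb_of_ne hS (hBp hb1B) (hBp hb4B) n14
    (STS16.dne dAB ha8A hb1B) (STS16.dne dAB ha8A hb4B) hT3
  have g17 : STS16.NB blocks b2 b3 a8 := STS16.nb_of_ne hS (hBp hb2B) (hBp hb3B) n23
    (STS16.dne dAB ha8A hb2B) (STS16.dne dAB ha8A hb3B) hT4
  have g19 : STS16.NB blocks b2 b4 a8 := STS16.nb_of_ne hS (hBp hb2B) (hBp hb4B) n24
    (STS16.dne dAB ha8A hb2B) (STS16.dne dAB ha8A hb4B) hT5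
  have g20 : STS16.NB blocks b3 b4 a8 := STS16.nb_of_ne hS (hBp hb3B) (hBp hb4B) n34
    (STS16.dne dAB ha8A hb3B) (STS16.dne dAB ha8A hb4B) hT6
  -- pick a7
  have hcA8 : (A \ {a8}).card = 7 := by
    rw [Finset.card_sdiff_of_subset (by simp [ha8A]), Finset.card_singleton, hA]
  obtain ⟨a7, ha7S, ha7F⟩ := STS16.pick
    (show ({STS16.th blocks b1 b2, STS16.th blocks b1 b3, STS16.th blocks b2 b3,
      STS16.th blocks a8 b1, STS16.th blocks a8 b2, STS16.th blocks a8 b3} : Finset α).card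
      < (A \ ({a8} : Finset α)).card from
      lt_of_le_of_lt (STS16.cle6 _ _ _ _ _ _) (by rw [hcA8]; norm_num))
  rw [Finset.mem_sdiff, Finset.mem_singleton] at ha7S
  obtain ⟨ha7A, na78⟩ := ha7S
  simp only [Finset.mem_insert, Finset.mem_singleton, not_or] at ha7F
  obtain ⟨hU1, hU2, hU3, hU4, hU5, hU6⟩ := ha7F
  have g12 : STS16.NB blocks b1 b2 a7 := STS16.nb_of_ne hS (hBp hb1B) (hBp hb2B) n12
    (STS16.dne dAB ha7A hb1B) (STS16.dne dAB ha7A hb2B) hU1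
  have g14 : STS16.NB blocks b1 b3 a7 := STS16.nb_of_ne hS (hBp hb1B) (hBp hb3B) n13
    (STS16.dne dAB ha7A hb1B) (STS16.dne dAB ha7A hb3B) hU2
  have g16 : STS16.NB blocks b2 b3 a7 := STS16.nb_of_ne hS (hBp hb2B) (hBp hb3B) n23
    (STS16.dne dAB ha7A hb2B) (STS16.dne dAB ha7A hb3B) hU3
  have g6 : STS16.NB blocks a7 a8 b1 := (STS16.nb_of_ne hS (hAp ha8A) (hBp hb1B)
    (STS16.dne dAB ha8A hb1B) na78 (STS16.dne dAB ha7A hb1B) hU4).p312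
  have g9 : STS16.NB blocks a7 a8 b2 := (STS16.nb_of_ne hS (hAp ha8A) (hBp hb2B)
    (STS16.dne dAB ha8A hb2B) na78 (STS16.dne dAB ha7A hb2B) hU5).p312
  have g10 : STS16.NB blocks a7 a8 b3 := (STS16.nb_of_ne hS (hAp ha8A) (hBp hb3B)
    (STS16.dne dAB ha8A hb3B) na78 (STS16.dne dAB ha7A hb3B) hU6).p312
  -- pick a6
  have hcA7 : (A \ {a8, a7}).card = 6 := by
    rw [Finset.card_sdiff_of_subset (by simp [Finset.insert_subset_iff, ha8A, ha7A]),
      STS16.card2 (Ne.symm na78), hA]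
  obtain ⟨a6, ha6S, ha6F⟩ := STS16.pick
    (show ({STS16.th blocks b1 b2, STS16.th blocks a7 b1, STS16.th blocks a7 b2,
      STS16.th blocks a8 b1, STS16.th blocks a8 b2} : Finset α).card
      < (A \ ({a8, a7} : Finset α)).card from
      lt_of_le_of_lt (STS16.cle5 _ _ _ _ _) (by rw [hcA7]; norm_num))
  rw [Finset.mem_sdiff] at ha6S
  obtain ⟨ha6A, ha6ni⟩ := ha6S
  simp only [Finset.mem_insert, Finset.mem_singleton, not_or] at ha6ni ha6F
  obtain ⟨na68, na67⟩ := ha6ni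
  obtain ⟨hV1, hV2, hV3, hV4, hV5⟩ := ha6F
  have g11 : STS16.NB blocks b1 b2 a6 := STS16.nb_of_ne hS (hBp hb1B) (hBp hb2B) n12
    (STS16.dne dAB ha6A hb1B) (STS16.dne dAB ha6A hb2B) hV1
  have g4 : STS16.NB blocks a6 a7 b1 := (STS16.nb_of_ne hS (hAp ha7A) (hBp hb1B)
    (STS16.dne dAB ha7A hb1B) na67 (STS16.dne dAB ha6A hb1B) hV2).p312
  have g7 : STS16.NB blocks a6 a7 b2 := (STS16.nb_of_ne hS (hAp ha7A) (hBp hb2B)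
    (STS16.dne dAB ha7A hb2B) na67 (STS16.dne dAB ha6A hb2B) hV3).p312
  have g5 : STS16.NB blocks a6 a8 b1 := (STS16.nb_of_ne hS (hAp ha8A) (hBp hb1B)
    (STS16.dne dAB ha8A hb1B) na68 (STS16.dne dAB ha6A hb1B) hV4).p312
  have g8 : STS16.NB blocks a6 a8 b2 := (STS16.nb_of_ne hS (hAp ha8A) (hBp hb2B)
    (STS16.dne dAB ha8A hb2B) na68 (STS16.dne dAB ha6A hb2B) hV5).p312
  -- pick a5
  have hcA6 : (A \ {a8, a7, a6}).card = 5 := by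
    rw [Finset.card_sdiff_of_subset (by simp [Finset.insert_subset_iff, ha8A, ha7A, ha6A]),
      STS16.card3 (Ne.symm na78) (Ne.symm na68) (Ne.symm na67), hA]
  obtain ⟨a5, ha5S, ha5F⟩ := STS16.pick
    (show ({STS16.th blocks a6 b1, STS16.th blocks a7 b1,
      STS16.th blocks a8 b1} : Finset α).card
      < (A \ ({a8, a7, a6} : Finset α)).card from
      lt_of_le_of_lt (STS16.cle3 _ _ _) (by rw [hcA6]; norm_num))
  rw [Finset.mem_sdiff] at ha5S
  obtain ⟨ha5A, ha5ni⟩ := ha5S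
  simp only [Finset.mem_insert, Finset.mem_singleton, not_or] at ha5ni ha5F
  obtain ⟨na58, na57, na56⟩ := ha5ni
  obtain ⟨hW1, hW2, hW3⟩ := ha5F
  have g1 : STS16.NB blocks a5 a6 b1 := (STS16.nb_of_ne hS (hAp ha6A) (hBp hb1B)
    (STS16.dne dAB ha6A hb1B) na56 (STS16.dne dAB ha5A hb1B) hW1).p312
  have g2 : STS16.NB blocks a5 a7 b1 := (STS16.nb_of_ne hS (hAp ha7A) (hBp hb1B)
    (STS16.dne dAB ha7A hb1B) na57 (STS16.dne dAB ha5A hb1B) hW2).p312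
  have g3 : STS16.NB blocks a5 a8 b1 := (STS16.nb_of_ne hS (hAp ha8A) (hBp hb1B)
    (STS16.dne dAB ha8A hb1B) na58 (STS16.dne dAB ha5A hb1B) hW3).p312
  -- pick a4 a3 a2 a1
  have hcT1 : (A \ {a5, a6, a7, a8}).card = 4 := by
    rw [Finset.card_sdiff_of_subset (by simp [Finset.insert_subset_iff, ha5A, ha6A, ha7A, ha8A]),
      STS16.card4 na56 na57 na58 na67 na68 na78, hA]
  obtain ⟨a4, ha4S, -⟩ := STS16.pick
    (show (∅ : Finset α).card < (A \ ({a5, a6, a7, a8} : Finset α)).card from by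
      simp [hcT1])
  have hcT2 : ((A \ {a5, a6, a7, a8}) \ {a4}).card = 3 := by
    rw [Finset.card_sdiff_of_subset (by simp [ha4S]), Finset.card_singleton, hcT1]
  obtain ⟨a3, ha3S, -⟩ := STS16.pick
    (show (∅ : Finset α).card < ((A \ ({a5, a6, a7, a8} : Finset α)) \ {a4}).card from by
      simp [hcT2])
  have hcT3 : (((A \ {a5, a6, a7, a8}) \ {a4}) \ {a3}).card = 2 := by
    rw [Finset.card_sdiff_of_subset (by simp [ha3S]), Finset.card_singleton, hcT2]
  obtain ⟨a2, ha2S, -⟩ := STS16.pick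
    (show (∅ : Finset α).card
      < (((A \ ({a5, a6, a7, a8} : Finset α)) \ {a4}) \ {a3}).card from by simp [hcT3])
  have hcT4 : ((((A \ {a5, a6, a7, a8}) \ {a4}) \ {a3}) \ {a2}).card = 1 := by
    rw [Finset.card_sdiff_of_subset (by simp [ha2S]), Finset.card_singleton, hcT3]
  obtain ⟨a1, ha1S, -⟩ := STS16.pick
    (show (∅ : Finset α).card
      < ((((A \ ({a5, a6, a7, a8} : Finset α)) \ {a4}) \ {a3}) \ {a2}).card from by
      simp [hcT4])
  rw [Finset.mem_sdiff] at ha1S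
  obtain ⟨ha1S, na12⟩ := ha1S
  rw [Finset.mem_sdiff] at ha1S ha2S
  obtain ⟨ha1S, na13⟩ := ha1S
  obtain ⟨ha2S, na23'⟩ := ha2S
  rw [Finset.mem_sdiff] at ha1S ha2S ha3S
  obtain ⟨ha1S, na14⟩ := ha1S
  obtain ⟨ha2S, na24'⟩ := ha2S
  obtain ⟨ha3S, na34'⟩ := ha3S
  rw [Finset.mem_sdiff] at ha1S ha2S ha3S ha4S
  obtain ⟨ha1A, ha1ni⟩ := ha1S
  obtain ⟨ha2A, ha2ni⟩ := ha2S
  obtain ⟨ha3A, ha3ni⟩ := ha3S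
  obtain ⟨ha4A, ha4ni⟩ := ha4S
  rw [Finset.mem_singleton] at na12 na13 na14 na23' na24' na34'
  simp only [Finset.mem_insert, Finset.mem_singleton, not_or] at ha1ni ha2ni ha3ni ha4ni
  obtain ⟨na15, na16, na17, na18⟩ := ha1ni
  obtain ⟨na25, na26, na27, na28⟩ := ha2ni
  obtain ⟨na35, na36, na37, na38⟩ := ha3ni
  obtain ⟨na45, na46, na47, na48⟩ := ha4ni
  -- pick c5 c6
  have hcC4 : (C \ {c1, c2, c3, c4}).card = 2 := by
    rw [Finset.card_sdiff_of_subset (by simp [Finset.insert_subset_iff, hc1C, hc2C, hc3C, hc4C]),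
      STS16.card4 m12 m13 m14 m23 m24 m34, hC]
  obtain ⟨c5, hc5S, -⟩ := STS16.pick
    (show (∅ : Finset α).card < (C \ ({c1, c2, c3, c4} : Finset α)).card from by
      simp [hcC4])
  have hcC5 : ((C \ {c1, c2, c3, c4}) \ {c5}).card = 1 := by
    rw [Finset.card_sdiff_of_subset (by simp [hc5S]), Finset.card_singleton, hcC4]
  obtain ⟨c6, hc6S, -⟩ := STS16.pick
    (show (∅ : Finset α).card < ((C \ ({c1, c2, c3, c4} : Finset α)) \ {c5}).card from by
      simp [hcC5])
  rw [Finset.mem_sdiff] at hc6S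
  obtain ⟨hc6S, m56'⟩ := hc6S
  rw [Finset.mem_sdiff] at hc5S hc6S
  obtain ⟨hc5C, hc5ni⟩ := hc5S
  obtain ⟨hc6C, hc6ni⟩ := hc6S
  rw [Finset.mem_singleton] at m56'
  simp only [Finset.mem_insert, Finset.mem_singleton, not_or] at hc5ni hc6ni
  obtain ⟨m15, m25, m35, m45⟩ := hc5ni
  obtain ⟨m16, m26, m36, m46⟩ := hc6ni
  -- nodup lists
  have hla : ([a1, a2, a3, a4, a5, a6, a7, a8] : List α).Nodup := by
    refine List.nodup_cons.mpr ⟨by simp [na12, na13, na14, na15, na16, na17, na18], ?_⟩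
    refine List.nodup_cons.mpr ⟨by simp [na23', na24', na25, na26, na27, na28], ?_⟩
    refine List.nodup_cons.mpr ⟨by simp [na34', na35, na36, na37, na38], ?_⟩
    refine List.nodup_cons.mpr ⟨by simp [na45, na46, na47, na48], ?_⟩
    refine List.nodup_cons.mpr ⟨by simp [na56, na57, na58], ?_⟩
    refine List.nodup_cons.mpr ⟨by simp [na67, na68], ?_⟩
    refine List.nodup_cons.mpr ⟨by simp [na78], ?_⟩
    simp
  have hlb : ([b1, b2, b3, b4, b5, b6, b7] : List α).Nodup := by
    refine List.nodup_cons.mpr ⟨by simp [n12, n13, n14, n15, n16, n17], ?_⟩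
    refine List.nodup_cons.mpr ⟨by simp [n23, n24, n25, n26, n27], ?_⟩
    refine List.nodup_cons.mpr ⟨by simp [n34, n35, n36, n37], ?_⟩
    refine List.nodup_cons.mpr ⟨by simp [n45, n46, n47], ?_⟩
    refine List.nodup_cons.mpr ⟨by simp [n56, n57], ?_⟩
    refine List.nodup_cons.mpr ⟨by simp [n67], ?_⟩
    simp
  have hlc : ([c1, c2, c3, c4, c5, c6] : List α).Nodup := by
    refine List.nodup_cons.mpr ⟨by simp [m12, m13, m14, Ne.symm m15, Ne.symm m16], ?_⟩
    refine List.nodup_cons.mpr ⟨by simp [m23, m24, Ne.symm m25, Ne.symm m26], ?_⟩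
    refine List.nodup_cons.mpr ⟨by simp [m34, Ne.symm m35, Ne.symm m36], ?_⟩
    refine List.nodup_cons.mpr ⟨by simp [Ne.symm m45, Ne.symm m46], ?_⟩
    refine List.nodup_cons.mpr ⟨by simp [Ne.symm m56'], ?_⟩
    simp
  -- toFinset equalities
  have hAeq : ([a1, a2, a3, a4, a5, a6, a7, a8] : List α).toFinset = A := by
    refine Finset.eq_of_subset_of_card_le ?_ ?_
    · intro x hx
      simp only [List.toFinset_cons, List.toFinset_nil, insert_empty_eq,
        Finset.mem_insert, Finset.mem_singleton] at hx
      rcases hx with rfl | rfl | rfl | rfl | rfl | rfl | rfl | rfl <;> assumption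
    · rw [List.toFinset_card_of_nodup hla, hA]
      simp
  have hBeq : ([b1, b2, b3, b4, b5, b6, b7] : List α).toFinset = B := by
    refine Finset.eq_of_subset_of_card_le ?_ ?_
    · intro x hx
      simp only [List.toFinset_cons, List.toFinset_nil, insert_empty_eq,
        Finset.mem_insert, Finset.mem_singleton] at hx
      rcases hx with rfl | rfl | rfl | rfl | rfl | rfl | rfl <;> assumption
    · rw [List.toFinset_card_of_nodup hlb, hB]
      simp
  have hCeq : ([c1, c2, c3, c4, c5, c6] : List α).toFinset = C := by
    refine Finset.eq_of_subset_of_card_le ?_ ?_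
    · intro x hx
      simp only [List.toFinset_cons, List.toFinset_nil, insert_empty_eq,
        Finset.mem_insert, Finset.mem_singleton] at hx
      rcases hx with rfl | rfl | rfl | rfl | rfl | rfl <;> assumption
    · rw [List.toFinset_card_of_nodup hlc, hC]
      simp
  exact ⟨_, STS16.assemble hS hABC dAB dAC dBC iA iB iC hla hlb hlc hAeq hBeq hCeq
    g1 g2 g3 g4 g5 g6 g7 g8 g9 g10 g11 g12 g13 g14 g15 g16 g17 g18 g19 g20
    f1 f2 f3 f4 f5 f6 f7 f8 f9 f10 f11 f12 f13 f14 f15 f16 f17 f18 f19 f20⟩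
end
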